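/- arXiv:2311.10392 — 6 statements merged into one kernel-verified Lean document; each statement's English description precedes it below -/
import Mathlib

section
/- Let n be a positive integer and let G be a set of lines of PG(3,q) that does not contain n+1 mutually skew lines. Then |G| ≤ n(q^2+q+1). -/
open Submodule

/-- A chamber of `PG(3,q)`: a mutually incident point-line-plane triple,
where points, lines and planes are the 1-, 2- and 3-dimensional subspaces
of a 4-dimensional vector space over `F = GF(q)`. -/
structure Chamber (F : Type) [Field F] where
  pt : Submodule F (Fin 4 → F)
  line : Submodule F (Fin 4 → F)
  plane : Submodule F (Fin 4 → F)
  pt_rank : Module.finrank F pt = 1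
  line_rank : Module.finrank F line = 2
  plane_rank : Module.finrank F plane = 3
  pt_le_line : pt ≤ line
  line_le_plane : line ≤ plane

/-- Two chambers are opposite if each point lies outside the other's plane
and the two lines are skew (intersect trivially). -/
def Chamber.Opp {F : Type} [Field F] (c d : Chamber F) : Prop :=
  ¬ c.pt ≤ d.plane ∧ ¬ d.pt ≤ c.plane ∧ c.line ⊓ d.line = ⊥

/-- An independent set of the Kneser graph on chambers: pairwise non-opposite chambers. -/
def IsIndep {F : Type} [Field F] (M : Set (Chamber F)) : Prop :=
  ∀ c ∈ M, ∀ d ∈ M, ¬ c.Opp d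

/-- A maximal independent set of the Kneser graph on chambers. -/
def IsMaxIndep {F : Type} [Field F] (M : Set (Chamber F)) : Prop :=
  IsIndep M ∧ ∀ c : Chamber F, (∀ d ∈ M, ¬ c.Opp d) → c ∈ M

/-- The `M`-weight of a line `l`: the number of chambers of `M` whose line is `l`. -/
noncomputable def wLine {F : Type} [Field F] (M : Set (Chamber F))
    (l : Submodule F (Fin 4 → F)) : ℕ :=
  {c ∈ M | c.line = l}.ncard

/-- The `M`-weight of an incident line-plane pair. -/
noncomputable def wPair {F : Type} [Field F] (M : Set (Chamber F))
    (l π : Submodule F (Fin 4 → F)) : ℕ :=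
  {c ∈ M | c.line = l ∧ c.plane = π}.ncard

/-- The `M`-weight of an incident point-line pair. -/
noncomputable def wPt {F : Type} [Field F] (M : Set (Chamber F))
    (P l : Submodule F (Fin 4 → F)) : ℕ :=
  {c ∈ M | c.pt = P ∧ c.line = l}.ncard

/-- A `π`-line of `M`: a line of weight `≠ (q+1)^2` lying in a plane `π` such that
the pair `(l, π)` has weight `q+1`. -/
def IsPiLine {F : Type} [Field F] [Fintype F] (M : Set (Chamber F))
    (l : Submodule F (Fin 4 → F)) : Prop :=
  Module.finrank F l = 2 ∧ wLine M l ≠ (Fintype.card F + 1)^2 ∧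
    ∃ π : Submodule F (Fin 4 → F), Module.finrank F π = 3 ∧ l ≤ π ∧ wPair M l π = Fintype.card F + 1

/-- A `P`-line of `M`: a line of weight `≠ (q+1)^2` through a point `P` such that
the pair `(P, l)` has weight `q+1`. -/
def IsPLine {F : Type} [Field F] [Fintype F] (M : Set (Chamber F))
    (l : Submodule F (Fin 4 → F)) : Prop :=
  Module.finrank F l = 2 ∧ wLine M l ≠ (Fintype.card F + 1)^2 ∧
    ∃ P : Submodule F (Fin 4 → F), Module.finrank F P = 1 ∧ P ≤ l ∧ wPt M P l = Fintype.card F + 1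

/-! The `q^2 + 1` points of the projective line over `GF(q^2)`, read as lines of `PG(3,q)`, are
pairwise skew, and so is every image of this spread under `GL(4,q)`; each image therefore meets `G`
in at most `n` lines. As `GL(4,q)` is transitive on lines, every line lies in the same number of
images, and double counting incidences gives
`|G| (q^2 + 1) ≤ n · #lines = n (q^2 + 1)(q^2 + q + 1)`. -/

open Module Finset Polynomial
open scoped Pointwise LinearAlgebra.Projectivization

theorem Set.ncard_mul_ncard_le_of_ncard_inter_smul_le {Γ α : Type*} [Group Γ] [Finite Γ]
    [MulAction Γ α] [MulAction.IsPretransitive Γ α] [Finite α] {S G : Set α} {n : ℕ}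
    (h : ∀ g : Γ, (G ∩ g • S).ncard ≤ n) : G.ncard * S.ncard ≤ n * Nat.card α := by
  classical
  cases nonempty_fintype Γ
  cases nonempty_fintype α
  obtain hG | ⟨l₀, -⟩ := G.eq_empty_or_nonempty
  · simp [hG]
  -- `c l` counts the translates of `S` through `l`; by transitivity it does not depend on `l`.
  let c : α → ℕ := fun l => #{g : Γ | l ∈ g • S}
  have hc : ∀ l, c l = c l₀ := fun l => by
    obtain ⟨a, rfl⟩ := MulAction.exists_smul_eq Γ l l₀
    refine card_bij' (fun g _ => a * g) (fun g _ => a⁻¹ * g) ?_ ?_ ?_ ?_ <;>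
      simp [mul_smul, Set.mem_smul_set_iff_inv_smul_mem]
  have hsum (T : Set α) : ∑ l ∈ T.toFinset, c l = ∑ g : Γ, (T ∩ g • S).ncard := by
    simp only [c, card_filter]
    rw [sum_comm]
    refine sum_congr rfl fun g _ => ?_
    rw [sum_boole, Nat.cast_id, ← Set.ncard_coe_finset]
    congr 1
    ext
    simp
  have htotal : Nat.card α * c l₀ = Nat.card Γ * S.ncard := by
    simpa [sum_congr rfl fun l _ => hc l, Set.ncard_smul_set, Nat.card_eq_fintype_card]
      using hsum Set.univ
  have hbound : G.ncard * c l₀ ≤ Nat.card Γ * n :=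
    calc G.ncard * c l₀ = ∑ g : Γ, (G ∩ g • S).ncard := by
          rw [← hsum, sum_congr rfl fun l _ => hc l, sum_const, smul_eq_mul,
            Set.ncard_eq_toFinset_card']
      _ ≤ Nat.card Γ * n :=
          (sum_le_sum fun g _ => h g).trans_eq (by simp [Nat.card_eq_fintype_card])
  rcases (c l₀).eq_zero_or_pos with hc₀ | hc₀
  · have : S.ncard = 0 := by simpa [hc₀] using htotal
    simp [this]
  · refine Nat.le_of_mul_le_mul_right ?_ hc₀
    calc G.ncard * S.ncard * c l₀ = G.ncard * c l₀ * S.ncard := by ring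
      _ ≤ Nat.card Γ * n * S.ncard := Nat.mul_le_mul_right _ hbound
      _ = n * Nat.card α * c l₀ := by rw [mul_assoc n, htotal]; ring

section Grassmannian

variable (F V : Type*) [Field F] [AddCommGroup V] [Module F V]

def subspacesOfFinrank (k : ℕ) : SubMulAction (V ≃ₗ[F] V) (Submodule F V) where
  carrier := {W | finrank F W = k}
  smul_mem' g W hW := (LinearEquiv.finrank_map_eq g W).trans hW

variable {F V}

@[simp]
theorem mem_subspacesOfFinrank {k : ℕ} {W : Submodule F V} :
    W ∈ subspacesOfFinrank F V k ↔ finrank F W = k :=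
  Iff.rfl

theorem exists_linearEquiv_map_eq [FiniteDimensional F V] {W W' : Submodule F V}
    (h : finrank F W = finrank F W') : ∃ e : V ≃ₗ[F] V, W.map (e : V →ₗ[F] V) = W' := by
  obtain ⟨C, hC⟩ := W.exists_isCompl
  obtain ⟨C', hC'⟩ := W'.exists_isCompl
  have hCC' : finrank F C = finrank F C' := by
    have := W.finrank_add_eq_of_isCompl hC
    have := W'.finrank_add_eq_of_isCompl hC'
    omega
  let e₁ : W ≃ₗ[F] W' := .ofFinrankEq _ _ h
  let e : V ≃ₗ[F] V := (W.prodEquivOfIsCompl C hC).symm ≪≫ₗ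
    e₁.prodCongr (.ofFinrankEq _ _ hCC') ≪≫ₗ W'.prodEquivOfIsCompl C' hC'
  have he : ∀ x : W, e x = e₁ x := fun x => by simp [e]
  refine ⟨e, Submodule.eq_of_le_of_finrank_eq ?_ ((LinearEquiv.finrank_map_eq e W).trans h)⟩
  rintro _ ⟨x, hx, rfl⟩
  simp [he ⟨x, hx⟩]

instance [FiniteDimensional F V] (k : ℕ) :
    MulAction.IsPretransitive (V ≃ₗ[F] V) (subspacesOfFinrank F V k) where
  exists_smul_eq W W' := by
    obtain ⟨e, he⟩ := exists_linearEquiv_map_eq (W.2.trans W'.2.symm)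
    exact ⟨e, Subtype.ext he⟩

instance [Finite V] : Finite (V ≃ₗ[F] V) :=
  Finite.of_injective _ DFunLike.coe_injective

theorem Set.Pairwise.disjoint_smul {k : ℕ} {S : Set (subspacesOfFinrank F V k)}
    (hS : S.Pairwise fun l m => Disjoint (l : Submodule F V) m) (g : V ≃ₗ[F] V) :
    (g • S).Pairwise fun l m => Disjoint (l : Submodule F V) m := by
  rintro _ ⟨l, hl, rfl⟩ _ ⟨m, hm, rfl⟩ hlm
  exact Submodule.disjoint_map g.injective (hS hl hm (ne_of_apply_ne _ hlm))

end Grassmannian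

section Counting

variable {F V : Type*} [Field F] [AddCommGroup V] [Module F V] [FiniteDimensional F V]

def linearIndependentSpanEqEquiv {k : ℕ} {W : Submodule F V} (hW : finrank F W = k) :
    {s : {s : Fin k → V // LinearIndependent F s} // Submodule.span F (Set.range s.1) = W} ≃
      {t : Fin k → W // LinearIndependent F t} where
  toFun s := ⟨fun i => ⟨s.1.1 i, s.2.le (Submodule.subset_span ⟨i, rfl⟩)⟩,
    LinearIndependent.of_comp W.subtype s.1.2⟩
  invFun t :=
    have ht : LinearIndependent F (fun i => (t.1 i : V)) := t.2.map' _ W.ker_subtype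
    ⟨⟨_, ht⟩, Submodule.eq_of_le_of_finrank_eq
      (Submodule.span_le.2 (Set.range_subset_iff.2 fun i => (t.1 i).2))
      (by rw [finrank_span_eq_card ht, hW, Fintype.card_fin])⟩
  left_inv _ := rfl
  right_inv _ := rfl

theorem natCard_subspacesOfFinrank_mul [Fintype F] {k : ℕ} (hk : k ≤ finrank F V) :
    Nat.card (subspacesOfFinrank F V k) *
        ∏ i : Fin k, (Fintype.card F ^ k - Fintype.card F ^ (i : ℕ)) =
      ∏ i : Fin k, (Fintype.card F ^ finrank F V - Fintype.card F ^ (i : ℕ)) := by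
  have := Module.finite_of_finite F (M := V)
  let span : {s : Fin k → V // LinearIndependent F s} → subspacesOfFinrank F V k := fun s =>
    ⟨Submodule.span F (Set.range s.1), by simp [finrank_span_eq_card s.2]⟩
  have hfiber (W) : Nat.card {s // span s = W} =
      ∏ i : Fin k, (Fintype.card F ^ k - Fintype.card F ^ (i : ℕ)) := by
    rw [Nat.card_congr ((Equiv.subtypeEquivRight fun s => Subtype.ext_iff).trans
      (linearIndependentSpanEqEquiv W.2)), card_linearIndependent W.2.ge, W.2]
  have := Fintype.ofFinite (subspacesOfFinrank F V k)
  rw [← card_linearIndependent hk, ← Nat.card_congr (Equiv.sigmaFiberEquiv span),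
    Nat.card_sigma]
  simp only [hfiber, sum_const, card_univ, smul_eq_mul, Nat.card_eq_fintype_card]

theorem natCard_lines_of_finrank_eq_four [Fintype F] (hV : finrank F V = 4) :
    Nat.card (subspacesOfFinrank F V 2) =
      (Fintype.card F ^ 2 + 1) * (Fintype.card F ^ 2 + Fintype.card F + 1) := by
  have h := natCard_subspacesOfFinrank_mul (F := F) (V := V) (k := 2) (by omega)
  have hq : 1 < Fintype.card F := Fintype.one_lt_card
  set q := Fintype.card F
  simp only [hV, Fin.prod_univ_two, Fin.val_zero, Fin.val_one, pow_zero, pow_one] at h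
  have hpos : 0 < (q ^ 2 - 1) * (q ^ 2 - q) := by
    apply Nat.mul_pos <;> apply Nat.sub_pos_of_lt <;> nlinarith
  refine Nat.eq_of_mul_eq_mul_right hpos (h.trans ?_)
  have : 1 ≤ q := hq.le
  zify [Nat.one_le_pow 2 q this, Nat.one_le_pow 4 q this, Nat.le_self_pow two_ne_zero q,
    Nat.le_self_pow (by norm_num : 4 ≠ 0) q]
  ring

end Counting

theorem FiniteField.exists_irreducible_natDegree_eq_two (F : Type*) [Field F] [Fintype F] :
    ∃ p : F[X], Irreducible p ∧ p.natDegree = 2 := by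
  -- Otherwise every monic quadratic has a root, hence is determined by its unordered pair of
  -- roots, and there are fewer such pairs than monic quadratics.
  by_contra! h
  have hroot : ∀ b c : F, ∃ t, t ^ 2 + b * t + c = 0 := fun b c => by
    have hdeg := natDegree_quadratic (R := F) (b := b) (c := c) one_ne_zero
    by_contra! hne
    refine h _ (irreducible_of_degree_le_three_of_not_isRoot (by rw [hdeg]; decide)
      fun t => ?_) hdeg
    simpa using hne t
  have hsurj : Function.Surjective (Sym2.lift
      ⟨fun r s => ((-(r + s), r * s) : F × F), fun r s => by simp [add_comm, mul_comm]⟩) := by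
    rintro ⟨b, c⟩
    obtain ⟨t, ht⟩ := hroot b c
    refine ⟨s(t, -b - t), ?_⟩
    simp only [Sym2.lift_mk, Prod.mk.injEq]
    exact ⟨by ring, by linear_combination -ht⟩
  have hcard := Fintype.card_le_of_surjective _ hsurj
  rw [Sym2.card, Fintype.card_prod, Nat.choose_two_right, Nat.le_div_iff_mul_le two_pos,
    Nat.add_sub_cancel] at hcard
  have hq : 1 < Fintype.card F := Fintype.one_lt_card
  nlinarith

namespace Projectivization

variable {F K W : Type*} [Field F] [Field K] [Algebra F K] [AddCommGroup W] [Module K W]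
  [Module F W] [IsScalarTower F K W]

theorem finrank_restrictScalars_submodule (P : ℙ K W) :
    finrank F (P.submodule.restrictScalars F) = finrank F K := by
  rw [← mul_one (finrank F K), ← P.finrank_submodule, finrank_mul_finrank F K P.submodule]
  rfl

theorem disjoint_submodule {P Q : ℙ K W} (h : P ≠ Q) : Disjoint P.submodule Q.submodule :=
  (Submodule.isAtom_iff_finrank_eq_one.2 P.finrank_submodule).disjoint_of_ne
    (Submodule.isAtom_iff_finrank_eq_one.2 Q.finrank_submodule) (submodule_injective.ne h)

end Projectivization

theorem exists_spread_of_finrank_eq_four {F V : Type*} [Field F] [Fintype F] [AddCommGroup V]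
    [Module F V] (hV : finrank F V = 4) :
    ∃ S : Set (subspacesOfFinrank F V 2), S.ncard = Fintype.card F ^ 2 + 1 ∧
      S.Pairwise fun l m => Disjoint (l : Submodule F V) m := by
  obtain ⟨p, hp, hdeg⟩ := FiniteField.exists_irreducible_natDegree_eq_two F
  have := Fact.mk hp
  let K := AdjoinRoot p
  have hK : finrank F K = 2 :=
    (AdjoinRoot.powerBasis hp.ne_zero).finrank.trans ((AdjoinRoot.powerBasis_dim _).trans hdeg)
  have : FiniteDimensional F K := (AdjoinRoot.powerBasis hp.ne_zero).finite
  have : FiniteDimensional F V := .of_finrank_pos (by omega)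
  let e : (K × K) ≃ₗ[F] V := .ofFinrankEq _ _ (by simp [hK, hV])
  -- The Desarguesian spread: the points of the projective line over `K = GF(q^2)`, read as
  -- `F`-subspaces of `K × K ≃ V`.
  let line : ℙ K (K × K) → subspacesOfFinrank F V 2 := fun P =>
    ⟨(P.submodule.restrictScalars F).map (e : K × K →ₗ[F] V),
      by rw [mem_subspacesOfFinrank, LinearEquiv.finrank_map_eq,
        P.finrank_restrictScalars_submodule, hK]⟩
  have hline : Function.Injective line := fun P Q h =>
    Projectivization.submodule_injective <| Submodule.restrictScalars_injective F K _ <|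
      Submodule.map_injective_of_injective e.injective (congrArg Subtype.val h)
  have : Finite K := Module.finite_of_finite F
  refine ⟨Set.range line, ?_, ?_⟩
  · rw [Set.ncard_range_of_injective hline, Projectivization.card_of_finrank_two K _ (by simp),
      natCard_eq_pow_finrank (K := F), hK, Nat.card_eq_fintype_card]
  · rintro _ ⟨P, rfl⟩ _ ⟨Q, rfl⟩ hPQ
    exact Submodule.disjoint_map e.injective <| (Submodule.disjoint_restrictScalars_iff F).2 <|
      Projectivization.disjoint_submodule (ne_of_apply_ne line hPQ)

theorem no_skew_bound_general {F : Type} [Field F] [Fintype F] {q n : ℕ}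
    (hq : Fintype.card F = q)
    (G : Set (Submodule F (Fin 4 → F)))
    (hG : ∀ l ∈ G, Module.finrank F l = 2)
    (hskew : ¬ ∃ S ⊆ G, S.ncard = n + 1 ∧
      S.Pairwise (fun l m => l ⊓ m = ⊥)) :
    G.ncard ≤ n * (q^2 + q + 1) := by
  subst hq
  have hV : finrank F (Fin 4 → F) = 4 := by simp
  obtain ⟨S, hS_card, hS⟩ := exists_spread_of_finrank_eq_four hV
  let G' : Set (subspacesOfFinrank F (Fin 4 → F) 2) := Subtype.val ⁻¹' G
  have hG' : G'.ncard = G.ncard := Set.ncard_preimage_of_injective_subset_range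
    Subtype.val_injective fun l hl => ⟨⟨l, hG l hl⟩, rfl⟩
  have hmeet : ∀ g : (Fin 4 → F) ≃ₗ[F] (Fin 4 → F), (G' ∩ g • S).ncard ≤ n := by
    intro g
    by_contra! h
    obtain ⟨T, hT, hT_card⟩ := Set.exists_subset_card_eq h
    refine hskew ⟨Subtype.val '' T, ?_, ?_, ?_⟩
    · rintro _ ⟨l, hl, rfl⟩
      exact (hT hl).1
    · rw [Set.ncard_image_of_injective _ Subtype.val_injective, hT_card]
    · rw [Subtype.val_injective.injOn.pairwise_image]
      exact ((hS.disjoint_smul g).mono fun l hl => (hT hl).2).imp fun _ _ => disjoint_iff.1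
  have key := Set.ncard_mul_ncard_le_of_ncard_inter_smul_le hmeet
  rw [hG', hS_card, natCard_lines_of_finrank_eq_four hV, ← mul_assoc, mul_right_comm] at key
  exact Nat.le_of_mul_le_mul_right key (by positivity)

/-- A set of lines of `PG(3,q)` with no `n+1` mutually skew lines
has at most `n(q^2+q+1)` elements. -/
theorem no_skew_bound {F : Type} [Field F] [Fintype F] {q n : ℕ}
    (hq : Fintype.card F = q) (hn : 0 < n)
    (G : Set (Submodule F (Fin 4 → F)))
    (hG : ∀ l ∈ G, Module.finrank F l = 2)
    (hskew : ¬ ∃ S ⊆ G, S.ncard = n + 1 ∧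
      S.Pairwise (fun l m => l ⊓ m = ⊥)) :
    G.ncard ≤ n * (q^2 + q + 1) :=
  no_skew_bound_general hq G hG hskew
end

section
/- Let M be a maximal independent set of the Kneser graph on chambers of PG(3,q), and let (l, π) be an incident line-plane pair. If at least two chambers of M contain both l and π, then all q+1 chambers containing l and π belong to M; moreover, in that case every chamber (Q, h, τ) of M satisfies h ∩ l ≠ ∅ or Q ∈ π. -/
open Submodule

instance chamberFinite {F : Type} [Field F] [Fintype F] : Finite (Chamber F) := by
  have h1 : Finite (Submodule F (Fin 4 → F)) :=
    Finite.of_injective (fun s => (s : Set (Fin 4 → F))) SetLike.coe_injective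
  exact Finite.of_injective (fun c : Chamber F => (c.pt, c.line, c.plane))
    (by rintro ⟨⟩ ⟨⟩ h; simp_all)

/-- If at least two chambers of `M` contain an incident line-plane pair `(l, π)`,
then every chamber containing `l` and `π` belongs to `M`; moreover every chamber
`(Q,h,τ)` of `M` then satisfies `h ∩ l ≠ ∅` or `Q ∈ π`. -/
theorem pair_weight_full {F : Type} [Field F] [Fintype F]
    (M : Set (Chamber F)) (hM : IsMaxIndep M)
    (l π : Submodule F (Fin 4 → F)) (hl : Module.finrank F l = 2)
    (hπ : Module.finrank F π = 3) (hlπ : l ≤ π)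
    (h2 : 2 ≤ wPair M l π) :
    (∀ c : Chamber F, c.line = l → c.plane = π → c ∈ M) ∧
    (∀ c ∈ M, c.line ⊓ l ≠ ⊥ ∨ c.pt ≤ π) := by
  classical
  -- Extract two distinct chambers of M with line l and plane π
  have hfin : ({c ∈ M | c.line = l ∧ c.plane = π} : Set (Chamber F)).Finite :=
    Set.toFinite _
  have h2' : 1 < ({c ∈ M | c.line = l ∧ c.plane = π} : Set (Chamber F)).ncard := by
    have : wPair M l π = ({c ∈ M | c.line = l ∧ c.plane = π} : Set (Chamber F)).ncard := rfl
    omega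
  obtain ⟨c1, c2, ⟨h1M, h1l, h1π⟩, ⟨h2M, h2l, h2π⟩, hne⟩ := (Set.one_lt_ncard_iff hfin).mp h2'
  have hptne : c1.pt ≠ c2.pt := by
    intro h
    apply hne
    cases c1; cases c2; simp_all
  -- c1.pt ⊔ c2.pt = l
  have hsup : c1.pt ⊔ c2.pt = l := by
    have hle : c1.pt ⊔ c2.pt ≤ l := sup_le (h1l ▸ c1.pt_le_line) (h2l ▸ c2.pt_le_line)
    refine Submodule.eq_of_le_of_finrank_le hle ?_
    have hlt : c1.pt < c1.pt ⊔ c2.pt := by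
      refine lt_of_le_of_ne le_sup_left ?_
      intro h
      apply hptne
      exact (Submodule.eq_of_le_of_finrank_le (h ▸ le_sup_right)
        (by rw [c1.pt_rank, c2.pt_rank])).symm
    have := Submodule.finrank_lt_finrank_of_lt hlt
    rw [c1.pt_rank] at this
    omega
  -- Key claim: every chamber of M meets l or has point in π
  have key : ∀ c ∈ M, c.line ⊓ l ≠ ⊥ ∨ c.pt ≤ π := by
    intro d hd
    by_contra hcon
    push_neg at hcon
    obtain ⟨hskew, hpt⟩ := hcon
    -- d not opposite c1 and c2 forces c1.pt, c2.pt ≤ d.plane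
    have hforce : ∀ c ∈ M, c.line = l → c.plane = π → c.pt ≤ d.plane := by
      intro c hc hcl hcπ
      by_contra hcp
      exact hM.1 c hc d hd ⟨hcp, hcπ ▸ hpt, by rw [hcl, inf_comm]; exact hskew⟩
    have hlplane : l ≤ d.plane := by
      rw [← hsup]
      exact sup_le (hforce c1 h1M h1l h1π) (hforce c2 h2M h2l h2π)
    -- two 2-dim subspaces of a 3-dim space meet nontrivially
    have hsum := Submodule.finrank_sup_add_finrank_inf_eq d.line l
    rw [hskew, d.line_rank, hl, finrank_bot] at hsum
    have hle3 : Module.finrank F ↥(d.line ⊔ l) ≤ 3 := by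
      have := Submodule.finrank_mono (sup_le d.line_le_plane hlplane)
      rw [d.plane_rank] at this
      exact this
    omega
  refine ⟨?_, key⟩
  intro c hcl hcπ
  apply hM.2
  intro d hd hopp
  obtain ⟨_, hdpt, hinf⟩ := hopp
  rcases key d hd with h | h
  · exact h (by rw [← hcl, inf_comm]; exact hinf)
  · exact hdpt (hcπ ▸ h)
end

section
/- Let M be a maximal independent set of the Kneser graph on chambers of PG(3,q). For every incident line-plane pair (l, π), the number of chambers of M containing both l and π is 0, 1, or q+1. -/
open Submodule

/-!
Two distinct chambers of `M` on the flag `(l, π)` have distinct points, which span `l`. A chamber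
opposite to some `(R, l, π)` has its line skew to `l`, so its plane cannot contain `l` and misses
one of those two points; it is then opposite to one of the two chambers of `M`. By maximality,
every `(R, l, π)` lies in `M`, and the weight is the number `q + 1` of points on `l`.
-/

section Subspaces

open Module

variable {F V : Type*} [Field F] [AddCommGroup V] [Module F V]

theorem Submodule.sup_eq_of_finrank_eq_one_of_ne [FiniteDimensional F V] {P Q l : Submodule F V}
    (hP : finrank F P = 1) (hQ : finrank F Q = 1) (hl : finrank F l = 2)
    (hPl : P ≤ l) (hQl : Q ≤ l) (hPQ : P ≠ Q) : P ⊔ Q = l := by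
  have hQP : ¬ Q ≤ P := fun h => hPQ (eq_of_le_of_finrank_eq h (hQ.trans hP.symm)).symm
  have hlt : P < P ⊔ Q := lt_of_le_of_ne le_sup_left fun h => hQP (h ▸ le_sup_right)
  have := Submodule.finrank_lt_finrank_of_lt hlt
  have := Submodule.finrank_mono (sup_le hPl hQl)
  exact eq_of_le_of_finrank_eq (sup_le hPl hQl) (by omega)

theorem Submodule.inf_ne_bot_of_finrank_lt_add [FiniteDimensional F V] {l m W : Submodule F V}
    (hlW : l ≤ W) (hmW : m ≤ W) (h : finrank F W < finrank F l + finrank F m) : l ⊓ m ≠ ⊥ := by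
  intro hbot
  have hsum := Submodule.finrank_sup_add_finrank_inf_eq l m
  rw [hbot, finrank_bot] at hsum
  have := Submodule.finrank_mono (sup_le hlW hmW)
  omega

variable (F) in
noncomputable def Submodule.pointsEquivProjectivization (l : Submodule F V) :
    {P : Submodule F V // P ≤ l ∧ finrank F P = 1} ≃ Projectivization F l :=
  ((Equiv.subtypeSubtypeEquivSubtypeInter (· ≤ l) (finrank F · = 1)).symm.trans
    ((Submodule.MapSubtype.orderIso l).toEquiv.subtypeEquiv
      (p := fun Q : Submodule F l => finrank F Q = 1) fun Q => by
        rw [← Submodule.finrank_map_subtype_eq l Q]; rfl).symm).trans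
    (Projectivization.equivSubmodule F l).symm

theorem Submodule.card_points_of_finrank_eq_two [Finite F] {l : Submodule F V}
    (hl : finrank F l = 2) :
    Nat.card {P : Submodule F V // P ≤ l ∧ finrank F P = 1} = Nat.card F + 1 := by
  rw [Nat.card_congr (l.pointsEquivProjectivization F), Projectivization.card_of_finrank_two F l hl]

end Subspaces

namespace Chamber

variable {F : Type} [Field F]

theorem ext {c d : Chamber F} (hpt : c.pt = d.pt) (hline : c.line = d.line)
    (hplane : c.plane = d.plane) : c = d := by
  cases c; cases d; simp_all

theorem opp_or_opp_of_pt_ne {c d e f : Chamber F} (hc : c.line = e.line ∧ c.plane = e.plane)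
    (hd : d.line = e.line ∧ d.plane = e.plane) (hpt : c.pt ≠ d.pt) (hef : e.Opp f) :
    c.Opp f ∨ d.Opp f := by
  obtain ⟨-, hfe, hskew⟩ := hef
  have hspan : c.pt ⊔ d.pt = e.line :=
    Submodule.sup_eq_of_finrank_eq_one_of_ne c.pt_rank d.pt_rank e.line_rank
      (hc.1 ▸ c.pt_le_line) (hd.1 ▸ d.pt_le_line) hpt
  have hnot : ¬ (c.pt ≤ f.plane ∧ d.pt ≤ f.plane) := fun ⟨hcf, hdf⟩ =>
    Submodule.inf_ne_bot_of_finrank_lt_add (hspan ▸ sup_le hcf hdf) f.line_le_plane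
      (by rw [e.line_rank, f.line_rank, f.plane_rank]; norm_num) hskew
  rcases not_and_or.mp hnot with hcf | hdf
  · exact .inl ⟨hcf, by rwa [hc.2], by rwa [hc.1]⟩
  · exact .inr ⟨hdf, by rwa [hd.2], by rwa [hd.1]⟩

end Chamber

section MaximalIndependentSets

variable {F : Type} [Field F] {M : Set (Chamber F)}

theorem IsMaxIndep.mem_of_pt_ne (hM : IsMaxIndep M) {c d e : Chamber F} (hcM : c ∈ M)
    (hdM : d ∈ M) (hc : c.line = e.line ∧ c.plane = e.plane)
    (hd : d.line = e.line ∧ d.plane = e.plane) (hpt : c.pt ≠ d.pt) : e ∈ M :=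
  hM.2 e fun f hfM hef => (Chamber.opp_or_opp_of_pt_ne hc hd hpt hef).elim
    (hM.1 c hcM f hfM) (hM.1 d hdM f hfM)

theorem IsMaxIndep.wPair_eq_card_add_one [Fintype F] (hM : IsMaxIndep M)
    {l π : Submodule F (Fin 4 → F)} (hl : Module.finrank F l = 2)
    (hπ : Module.finrank F π = 3) (hlπ : l ≤ π) {c d : Chamber F}
    (hc : c ∈ {c ∈ M | c.line = l ∧ c.plane = π}) (hd : d ∈ {c ∈ M | c.line = l ∧ c.plane = π})
    (hcd : c ≠ d) : wPair M l π = Fintype.card F + 1 := by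
  obtain ⟨hcM, hcl, hcπ⟩ := hc
  obtain ⟨hdM, hdl, hdπ⟩ := hd
  have hpt : c.pt ≠ d.pt := fun h => hcd (Chamber.ext h (hcl.trans hdl.symm) (hcπ.trans hdπ.symm))
  let chambersOnFlag : {c ∈ M | c.line = l ∧ c.plane = π} ≃
      {P : Submodule F (Fin 4 → F) // P ≤ l ∧ Module.finrank F P = 1} :=
    { toFun := fun e => ⟨e.1.pt, e.1.pt_le_line.trans e.2.2.1.le, e.1.pt_rank⟩
      invFun := fun P => ⟨⟨P.1, l, π, P.2.2, hl, hπ, P.2.1, hlπ⟩,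
        hM.mem_of_pt_ne hcM hdM ⟨hcl, hcπ⟩ ⟨hdl, hdπ⟩ hpt, rfl, rfl⟩
      left_inv := fun e => Subtype.ext (Chamber.ext rfl e.2.2.1.symm e.2.2.2.symm)
      right_inv := fun P => rfl }
  rw [wPair, ← Nat.card_coe_set_eq, Nat.card_congr chambersOnFlag,
    Submodule.card_points_of_finrank_eq_two hl, Nat.card_eq_fintype_card]

end MaximalIndependentSets

/-- The `M`-weight of an incident line-plane pair is `0`, `1` or `q+1`. -/
theorem pair_weight_cases {F : Type} [Field F] [Fintype F] {q : ℕ}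
    (hq : Fintype.card F = q)
    (M : Set (Chamber F)) (hM : IsMaxIndep M)
    (l π : Submodule F (Fin 4 → F)) (hl : Module.finrank F l = 2)
    (hπ : Module.finrank F π = 3) (hlπ : l ≤ π) :
    wPair M l π = 0 ∨ wPair M l π = 1 ∨ wPair M l π = q + 1 := by
  by_cases hS : {c ∈ M | c.line = l ∧ c.plane = π}.Subsingleton
  · have : wPair M l π ≤ 1 := (Set.ncard_le_one hS.finite).mpr hS
    omega
  · obtain ⟨c, hc, d, hd, hcd⟩ := Set.not_subsingleton_iff.mp hS
    exact .inr <| .inr <| hq ▸ hM.wPair_eq_card_add_one hl hπ hlπ hc hd hcd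
end

section
/- Let M be a maximal independent set of the Kneser graph on chambers of PG(3,q) and let l be a line. The M-weight of l equals (q+1)^2 if and only if l meets the line of every chamber of M. -/
open Submodule

/-! The chambers with line `l` correspond to pairs (point on `l`, plane through `l`), so there
are `(q+1)^2` of them and `l` has weight `(q+1)^2` exactly when all of them lie in `M`.
If `l` meets every line of `M`, no chamber on `l` is opposite to a chamber of `M`, so maximality
puts all of them in `M`. If instead `l` is skew to the line of some `d ∈ M`, then `l` is not in
the plane of `d`; a point of `l` outside that plane and a plane through `l` missing the point
of `d` form a chamber on `l` opposite to `d`, which independence keeps out of `M`. -/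

open Module
open scoped LinearAlgebra.Projectivization

namespace Submodule

variable {K V : Type*} [Field K] [AddCommGroup V] [Module K V]

theorem finrank_map_mkQ_add_finrank [FiniteDimensional K V] {l π : Submodule K V} (h : l ≤ π) :
    finrank K (π.map l.mkQ) + finrank K l = finrank K π := by
  have := LinearMap.finrank_range_add_finrank_ker (l.mkQ ∘ₗ π.subtype)
  rwa [LinearMap.range_comp, range_subtype, LinearMap.ker_comp, ker_mkQ,
    (comapSubtypeEquivOfLe h).finrank_eq] at this

noncomputable def pointsLeEquiv (l : Submodule K V) :
    {P : Submodule K V // P ≤ l ∧ finrank K P = 1} ≃ ℙ K l :=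
  calc {P : Submodule K V // P ≤ l ∧ finrank K P = 1}
      ≃ {P : {P : Submodule K V // P ≤ l} // finrank K P.1 = 1} :=
        (Equiv.subtypeSubtypeEquivSubtypeInter _ _).symm
    _ ≃ {H : Submodule K l // finrank K H = 1} :=
        ((MapSubtype.orderIso l).toEquiv.subtypeEquiv fun H =>
          (finrank_map_subtype_eq l H).symm ▸ Iff.rfl).symm
    _ ≃ ℙ K l := (Projectivization.equivSubmodule K l).symm

noncomputable def coversEquiv [FiniteDimensional K V] (l : Submodule K V) :
    {π : Submodule K V // l ≤ π ∧ finrank K π = finrank K l + 1} ≃ ℙ K (V ⧸ l) :=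
  calc {π : Submodule K V // l ≤ π ∧ finrank K π = finrank K l + 1}
      ≃ {π : Set.Ici l // finrank K π.1 = finrank K l + 1} :=
        (Equiv.subtypeSubtypeEquivSubtypeInter (· ∈ Set.Ici l) _).symm
    _ ≃ {H : Submodule K (V ⧸ l) // finrank K H = 1} :=
        (comapMkQRelIso l).symm.toEquiv.subtypeEquiv fun π => by
          have := finrank_map_mkQ_add_finrank π.2
          change _ ↔ finrank K (π.1.map l.mkQ) = 1
          omega
    _ ≃ ℙ K (V ⧸ l) := (Projectivization.equivSubmodule K _).symm

theorem card_points_le [Finite K] {l : Submodule K V} (hl : finrank K l = 2) :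
    Nat.card {P : Submodule K V // P ≤ l ∧ finrank K P = 1} = Nat.card K + 1 :=
  (Nat.card_congr l.pointsLeEquiv).trans (Projectivization.card_of_finrank_two K l hl)

theorem card_covers [Finite K] [FiniteDimensional K V] {l : Submodule K V}
    (hl : finrank K l + 2 = finrank K V) :
    Nat.card {π : Submodule K V // l ≤ π ∧ finrank K π = finrank K l + 1} = Nat.card K + 1 := by
  have hQ : finrank K (V ⧸ l) = 2 := by
    have := l.finrank_quotient_add_finrank
    omega
  exact (Nat.card_congr l.coversEquiv).trans (Projectivization.card_of_finrank_two K _ hQ)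

theorem exists_point_le_not_le {l π : Submodule K V} (h : ¬ l ≤ π) :
    ∃ P : Submodule K V, P ≤ l ∧ finrank K P = 1 ∧ ¬ P ≤ π := by
  obtain ⟨v, hvl, hvπ⟩ := SetLike.not_le_iff_exists.mp h
  have hv : v ≠ 0 := fun hv => hvπ (hv ▸ π.zero_mem)
  exact ⟨K ∙ v, (span_singleton_le_iff_mem v l).mpr hvl, finrank_span_singleton hv,
    fun hle => hvπ ((span_singleton_le_iff_mem v π).mp hle)⟩

/-- Joining `l` with a point `⟨w⟩ ≠ p` of `m` gives the required subspace, since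
`(l ⊔ ⟨w⟩) ⊓ m = ⟨w⟩` by modularity. -/
theorem exists_cover_not_le [FiniteDimensional K V] {l m p : Submodule K V}
    (hlm : l ⊓ m = ⊥) (hpm : p < m) (hp : finrank K p = 1) :
    ∃ π : Submodule K V, l ≤ π ∧ finrank K π = finrank K l + 1 ∧ ¬ p ≤ π := by
  obtain ⟨w, hwm, hwp⟩ := SetLike.exists_of_lt hpm
  have hw : w ≠ 0 := fun hw => hwp (hw ▸ p.zero_mem)
  have hwm' : K ∙ w ≤ m := (span_singleton_le_iff_mem w m).mpr hwm
  have hlw : l ⊓ K ∙ w = ⊥ := eq_bot_iff.mpr (hlm ▸ inf_le_inf_left l hwm')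
  refine ⟨l ⊔ K ∙ w, le_sup_left, ?_, fun hle => hwp ?_⟩
  · have := finrank_sup_add_finrank_inf_eq l (K ∙ w)
    rw [hlw, finrank_bot, finrank_span_singleton hw] at this
    omega
  · have hcut : (K ∙ w ⊔ l) ⊓ m = K ∙ w := by
      rw [sup_inf_assoc_of_le l hwm', hlm, sup_bot_eq]
    have hpw : p = K ∙ w :=
      eq_of_le_of_finrank_eq (hcut ▸ le_inf (sup_comm l _ ▸ hle) hpm.le)
        (by rw [hp, finrank_span_singleton hw])
    exact hpw ▸ mem_span_singleton_self w

end Submodule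

namespace Chamber

variable {F : Type} [Field F]

instance [Finite F] : Finite (Chamber F) :=
  Finite.of_injective (fun c : Chamber F => (c.pt, c.line, c.plane)) <| by
    rintro ⟨⟩ ⟨⟩ h
    cases h
    rfl

def lineEqEquiv {l : Submodule F (Fin 4 → F)} (hl : finrank F l = 2) :
    {c : Chamber F // c.line = l} ≃
      {P : Submodule F (Fin 4 → F) // P ≤ l ∧ finrank F P = 1} ×
        {π : Submodule F (Fin 4 → F) // l ≤ π ∧ finrank F π = 3} where
  toFun c := (⟨c.1.pt, c.1.pt_le_line.trans c.2.le, c.1.pt_rank⟩,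
    ⟨c.1.plane, c.2.ge.trans c.1.line_le_plane, c.1.plane_rank⟩)
  invFun x := ⟨⟨x.1.1, l, x.2.1, x.1.2.2, hl, x.2.2.2, x.1.2.1, x.2.2.1⟩, rfl⟩
  left_inv := by
    rintro ⟨⟨⟩, rfl⟩
    rfl

theorem ncard_line_eq [Fintype F] {l : Submodule F (Fin 4 → F)} (hl : finrank F l = 2) :
    {c : Chamber F | c.line = l}.ncard = (Fintype.card F + 1) ^ 2 := by
  have hplanes : Nat.card {π : Submodule F (Fin 4 → F) // l ≤ π ∧ finrank F π = 3} =
      Nat.card F + 1 := by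
    simpa only [hl] using Submodule.card_covers (l := l) (by rw [hl, finrank_fin_fun])
  rw [← Nat.card_coe_set_eq]
  exact (Nat.card_congr (lineEqEquiv hl)).trans <| by
    rw [Nat.card_prod, Submodule.card_points_le hl, hplanes, Nat.card_eq_fintype_card, sq]

theorem exists_line_eq_opp {l : Submodule F (Fin 4 → F)} (hl : finrank F l = 2) (d : Chamber F)
    (hld : l ⊓ d.line = ⊥) : ∃ c : Chamber F, c.line = l ∧ c.Opp d := by
  have hl_plane : ¬ l ≤ d.plane := fun hle => by
    have hsup := finrank_sup_add_finrank_inf_eq l d.line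
    have hmono := Submodule.finrank_mono (sup_le hle d.line_le_plane)
    rw [hld, finrank_bot, hl, d.line_rank] at hsup
    rw [d.plane_rank] at hmono
    omega
  obtain ⟨P, hPl, hP, hPd⟩ := Submodule.exists_point_le_not_le hl_plane
  have hpt_line : d.pt < d.line :=
    Submodule.lt_of_le_of_finrank_lt_finrank d.pt_le_line (by rw [d.pt_rank, d.line_rank]; omega)
  obtain ⟨π, hlπ, hπ, hdπ⟩ := Submodule.exists_cover_not_le hld hpt_line d.pt_rank
  exact ⟨⟨P, l, π, hP, hl, by rw [hπ, hl], hPl, hlπ⟩, rfl, hPd, hdπ, hld⟩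

end Chamber

theorem wLine_eq_iff_forall_line_eq_mem {F : Type} [Field F] [Fintype F] (M : Set (Chamber F))
    {l : Submodule F (Fin 4 → F)} (hl : finrank F l = 2) :
    wLine M l = (Fintype.card F + 1) ^ 2 ↔ ∀ c : Chamber F, c.line = l → c ∈ M := by
  rw [wLine, ← Chamber.ncard_line_eq hl]
  constructor
  · intro h c hc
    have hall : {c ∈ M | c.line = l} = {c | c.line = l} :=
      Set.eq_of_subset_of_ncard_le (fun c hc => hc.2) h.ge
    exact (hall.ge hc).1
  · intro h
    congr 1
    ext c
    exact ⟨And.right, fun hc => ⟨h c hc, hc⟩⟩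

/-- A line has `M`-weight `(q+1)^2` if and only if it meets the line of
every chamber of `M`. -/
theorem weight_max_iff_meets_all {F : Type} [Field F] [Fintype F] {q : ℕ}
    (hq : Fintype.card F = q)
    (M : Set (Chamber F)) (hM : IsMaxIndep M)
    (l : Submodule F (Fin 4 → F)) (hl : Module.finrank F l = 2) :
    wLine M l = (q + 1)^2 ↔ ∀ c ∈ M, l ⊓ c.line ≠ ⊥ := by
  rw [← hq, wLine_eq_iff_forall_line_eq_mem M hl]
  constructor
  · intro hall d hd hld
    obtain ⟨c, hcl, hcd⟩ := Chamber.exists_line_eq_opp hl d hld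
    exact hM.1 c (hall c hcl) d hd hcd
  · intro hmeet c hcl
    exact hM.2 c fun d hd hcd => hmeet d hd (hcl ▸ hcd.2.2)
end

section
/- Let M be a maximal independent set of the Kneser graph on chambers of PG(3,q), let l be a line of M-weight 2, and let (P1, l, π1), (P2, l, π2) be the two chambers of M containing l. Then P1 ≠ P2 and π1 ≠ π2, and every chamber (Q, h, τ) of M with h skew to l satisfies either (P1 ∈ τ and Q ∈ π2) or (P2 ∈ τ and Q ∈ π1). -/
open Submodule

section Helpers
variable {F : Type} [Field F]

lemma pt_ne_bot {p : Submodule F (Fin 4 → F)} (h : Module.finrank F p = 1) : p ≠ ⊥ := by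
  intro hb
  rw [hb, finrank_bot] at h
  exact one_ne_zero h.symm

lemma lines_in_plane_meet {l₁ l₂ π : Submodule F (Fin 4 → F)}
    (h1 : Module.finrank F l₁ = 2) (h2 : Module.finrank F l₂ = 2)
    (hπ : Module.finrank F π = 3) (le1 : l₁ ≤ π) (le2 : l₂ ≤ π) :
    l₁ ⊓ l₂ ≠ ⊥ := by
  intro hb
  have h := Submodule.finrank_sup_add_finrank_inf_eq l₁ l₂
  rw [hb, finrank_bot, h1, h2] at h
  have hle : Module.finrank F ↥(l₁ ⊔ l₂) ≤ Module.finrank F ↥π :=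
    Submodule.finrank_mono (sup_le le1 le2)
  rw [hπ] at hle
  omega

lemma planes_inter {l π₁ π₂ : Submodule F (Fin 4 → F)} (hl : Module.finrank F l = 2)
    (h1 : Module.finrank F π₁ = 3) (h2 : Module.finrank F π₂ = 3)
    (le1 : l ≤ π₁) (le2 : l ≤ π₂) (hne : π₁ ≠ π₂) : π₁ ⊓ π₂ = l := by
  have hle : l ≤ π₁ ⊓ π₂ := le_inf le1 le2
  have hm1 : Module.finrank F ↥(π₁ ⊓ π₂) ≤ 3 := h1 ▸ Submodule.finrank_mono inf_le_left
  have hm2 : Module.finrank F ↥l ≤ Module.finrank F ↥(π₁ ⊓ π₂) := Submodule.finrank_mono hle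
  have hd : Module.finrank F ↥(π₁ ⊓ π₂) ≠ 3 := by
    intro h3
    have e1 : π₁ ⊓ π₂ = π₁ := Submodule.eq_of_le_of_finrank_eq inf_le_left (by rw [h3, h1])
    have e2 : π₁ ⊓ π₂ = π₂ := Submodule.eq_of_le_of_finrank_eq inf_le_right (by rw [h3, h2])
    exact hne (e1 ▸ e2)
  exact (Submodule.eq_of_le_of_finrank_eq hle (by omega)).symm

lemma points_sup {l P₁ P₂ : Submodule F (Fin 4 → F)} (hl : Module.finrank F l = 2)
    (h1 : Module.finrank F P₁ = 1) (h2 : Module.finrank F P₂ = 1)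
    (le1 : P₁ ≤ l) (le2 : P₂ ≤ l) (hne : P₁ ≠ P₂) : P₁ ⊔ P₂ = l := by
  have hb : P₁ ⊓ P₂ = ⊥ := by
    by_contra hbb
    have hm : Module.finrank F ↥(P₁ ⊓ P₂) ≤ 1 := h1 ▸ Submodule.finrank_mono inf_le_left
    have hnz : Module.finrank F ↥(P₁ ⊓ P₂) ≠ 0 := by
      intro h0
      exact hbb (Submodule.finrank_eq_zero.mp h0)
    have e1 : P₁ ⊓ P₂ = P₁ := Submodule.eq_of_le_of_finrank_eq inf_le_left (by omega)
    have e2 : P₁ ⊓ P₂ = P₂ := Submodule.eq_of_le_of_finrank_eq inf_le_right (by omega)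
    exact hne (e1 ▸ e2)
  have h := Submodule.finrank_sup_add_finrank_inf_eq P₁ P₂
  rw [hb, finrank_bot, h1, h2] at h
  exact Submodule.eq_of_le_of_finrank_eq (sup_le le1 le2) (by omega)

lemma third_point {l P₁ P₂ : Submodule F (Fin 4 → F)} (hl : Module.finrank F l = 2)
    (h1 : Module.finrank F P₁ = 1) (h2 : Module.finrank F P₂ = 1)
    (le1 : P₁ ≤ l) (le2 : P₂ ≤ l) (hne : P₁ ≠ P₂) :
    ∃ P₃ : Submodule F (Fin 4 → F),
      Module.finrank F P₃ = 1 ∧ P₃ ≤ l ∧ P₃ ≠ P₁ ∧ P₃ ≠ P₂ := by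
  obtain ⟨u₁, hu₁, hu₁0⟩ := Submodule.exists_mem_ne_zero_of_ne_bot (pt_ne_bot h1)
  obtain ⟨u₂, hu₂, hu₂0⟩ := Submodule.exists_mem_ne_zero_of_ne_bot (pt_ne_bot h2)
  have hsp1 : span F {u₁} = P₁ :=
    Submodule.eq_of_le_of_finrank_eq (span_le.mpr (by simpa using hu₁))
      (by rw [finrank_span_singleton hu₁0, h1])
  have hsp2 : span F {u₂} = P₂ :=
    Submodule.eq_of_le_of_finrank_eq (span_le.mpr (by simpa using hu₂))
      (by rw [finrank_span_singleton hu₂0, h2])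
  have hv0 : u₁ + u₂ ≠ 0 := by
    intro h0
    apply hne
    have : u₁ = -u₂ := by linear_combination h0
    rw [← hsp1, ← hsp2, this]
    apply le_antisymm
    · refine span_le.mpr ?_
      have : -u₂ ∈ span F {u₂} := neg_mem (Submodule.mem_span_singleton_self u₂)
      simpa using this
    · refine span_le.mpr ?_
      have : -(-u₂) ∈ span F {-u₂} := neg_mem (Submodule.mem_span_singleton_self (-u₂))
      simpa using this

  refine ⟨span F {u₁ + u₂}, finrank_span_singleton hv0,
    span_le.mpr (by simpa using add_mem (le1 hu₁) (le2 hu₂)), ?_, ?_⟩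
  · intro h
    apply hne
    have hmem : u₁ + u₂ ∈ P₁ := h ▸ Submodule.mem_span_singleton_self _
    have : u₂ ∈ P₁ := by simpa using sub_mem hmem hu₁
    rw [← hsp2]
    exact (Submodule.eq_of_le_of_finrank_eq (span_le.mpr (by simpa using this))
      (by rw [finrank_span_singleton hu₂0, h1])).symm
  · intro h
    apply hne
    have hmem : u₁ + u₂ ∈ P₂ := h ▸ Submodule.mem_span_singleton_self _
    have : u₁ ∈ P₂ := by simpa using sub_mem hmem hu₂
    rw [← hsp1]
    exact Submodule.eq_of_le_of_finrank_eq (span_le.mpr (by simpa using this))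
      (by rw [finrank_span_singleton hu₁0, h2])

lemma third_plane {l π₁ π₂ : Submodule F (Fin 4 → F)} (hl : Module.finrank F l = 2)
    (h1 : Module.finrank F π₁ = 3) (h2 : Module.finrank F π₂ = 3)
    (le1 : l ≤ π₁) (le2 : l ≤ π₂) (hne : π₁ ≠ π₂) :
    ∃ π₃ : Submodule F (Fin 4 → F),
      Module.finrank F π₃ = 3 ∧ l ≤ π₃ ∧ π₃ ≠ π₁ ∧ π₃ ≠ π₂ := by
  have hint : π₁ ⊓ π₂ = l := planes_inter hl h1 h2 le1 le2 hne
  have hlt1 : l < π₁ := lt_of_le_of_ne le1 (by intro h; rw [← h, hl] at h1; omega)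
  have hlt2 : l < π₂ := lt_of_le_of_ne le2 (by intro h; rw [← h, hl] at h2; omega)
  obtain ⟨v₁, hv₁π, hv₁l⟩ := SetLike.exists_of_lt hlt1
  obtain ⟨v₂, hv₂π, hv₂l⟩ := SetLike.exists_of_lt hlt2
  have hvnπ₁ : v₁ + v₂ ∉ π₁ := by
    intro h
    have : v₂ ∈ π₁ := by simpa using sub_mem h hv₁π
    exact hv₂l (hint ▸ Submodule.mem_inf.mpr ⟨this, hv₂π⟩)
  have hvnπ₂ : v₁ + v₂ ∉ π₂ := by
    intro h
    have : v₁ ∈ π₂ := by simpa using sub_mem h hv₂π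
    exact hv₁l (hint ▸ Submodule.mem_inf.mpr ⟨hv₁π, this⟩)
  have hvnl : v₁ + v₂ ∉ l := fun h => hvnπ₁ (le1 h)
  have hv0 : v₁ + v₂ ≠ 0 := fun h => hvnl (h ▸ zero_mem l)
  refine ⟨l ⊔ span F {v₁ + v₂}, ?_, le_sup_left, ?_, ?_⟩
  · have hdis : l ⊓ span F {v₁ + v₂} = ⊥ :=
      disjoint_iff.mp (Submodule.disjoint_span_singleton.mpr (fun h => absurd h hvnl))
    have h := Submodule.finrank_sup_add_finrank_inf_eq l (span F {v₁ + v₂})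
    rw [hdis, finrank_bot, hl, finrank_span_singleton hv0] at h
    omega
  · intro h
    exact hvnπ₁ (h ▸ (le_sup_right : _ ≤ l ⊔ span F {v₁+v₂}) (Submodule.mem_span_singleton_self _))
  · intro h
    exact hvnπ₂ (h ▸ (le_sup_right : _ ≤ l ⊔ span F {v₁+v₂}) (Submodule.mem_span_singleton_self _))

end Helpers

lemma Chamber.ext' {F : Type} [Field F] (c d : Chamber F) (h1 : c.pt = d.pt)
    (h2 : c.line = d.line) (h3 : c.plane = d.plane) : c = d := by
  cases c; cases d; simp_all

/-- For a line of `M`-weight `2` with its two chambers `(P₁,l,π₁)`, `(P₂,l,π₂)`,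
we have `P₁ ≠ P₂`, `π₁ ≠ π₂`, and every chamber of `M` whose line is skew to `l`
has its point in one of the `πᵢ` and its plane through the other `Pⱼ`. -/

theorem weight_two_structure {F : Type} [Field F] [Fintype F]
    (M : Set (Chamber F)) (hM : IsMaxIndep M)
    (l : Submodule F (Fin 4 → F)) (hl : Module.finrank F l = 2)
    (hw : wLine M l = 2)
    (c₁ c₂ : Chamber F) (hc₁ : c₁ ∈ M) (hc₂ : c₂ ∈ M)
    (hl₁ : c₁.line = l) (hl₂ : c₂.line = l) (hne : c₁ ≠ c₂) :
    c₁.pt ≠ c₂.pt ∧ c₁.plane ≠ c₂.plane ∧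
    ∀ c ∈ M, c.line ⊓ l = ⊥ →
      (c₁.pt ≤ c.plane ∧ c.pt ≤ c₂.plane) ∨
      (c₂.pt ≤ c.plane ∧ c.pt ≤ c₁.plane) := by
  have hind := hM.1
  obtain ⟨a, b, hab, hS⟩ := Set.ncard_eq_two.mp hw
  have hmemS : ∀ c : Chamber F, c ∈ M → c.line = l → c = a ∨ c = b := by
    intro c hc hcl
    have : c ∈ ({a, b} : Set (Chamber F)) := hS ▸ ⟨hc, hcl⟩
    simpa using this
  have hno : ∀ d ∈ M, ∀ e : Chamber F, e.line = l → d.line ⊓ l = ⊥ →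
      ¬ e.Opp d → (e.pt ≤ d.plane ∨ d.pt ≤ e.plane) := by
    intro d hd e hel hskew hopp
    by_contra hcon
    push_neg at hcon
    exact hopp ⟨hcon.1, hcon.2, by rw [hel, inf_comm]; exact hskew⟩
  have hptl : ∀ d : Chamber F, d.line ⊓ l = ⊥ → ¬ d.pt ≤ l := by
    intro d hskew hle
    have : d.pt ≤ ⊥ := by rw [← hskew]; exact le_inf d.pt_le_line hle
    exact pt_ne_bot d.pt_rank (le_bot_iff.mp this)
  have hP1l : c₁.pt ≤ l := hl₁ ▸ c₁.pt_le_line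
  have hP2l : c₂.pt ≤ l := hl₂ ▸ c₂.pt_le_line
  have hlπ1 : l ≤ c₁.plane := hl₁ ▸ c₁.line_le_plane
  have hlπ2 : l ≤ c₂.plane := hl₂ ▸ c₂.line_le_plane
  have hPne : c₁.pt ≠ c₂.pt := by
    intro hP
    have hπne : c₁.plane ≠ c₂.plane := by
      intro hπ
      exact hne (Chamber.ext' c₁ c₂ hP (hl₁.trans hl₂.symm) hπ)
    obtain ⟨π₃, hπ₃r, hlπ₃, hπ₃1, hπ₃2⟩ :=
      third_plane hl c₁.plane_rank c₂.plane_rank hlπ1 hlπ2 hπne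
    have hptl1 : c₁.pt ≤ l := hP1l
    let c₃ : Chamber F := ⟨c₁.pt, l, π₃, c₁.pt_rank, hl, hπ₃r, hptl1, hlπ₃⟩
    have hc₃M : c₃ ∈ M := by
      apply hM.2
      intro d hd
      rintro ⟨hd1, hd2, hd3⟩
      have hskew : d.line ⊓ l = ⊥ := by rw [inf_comm]; exact hd3
      have h1 := hno d hd c₁ hl₁ hskew (hind c₁ hc₁ d hd)
      have h2 := hno d hd c₂ hl₂ hskew (hind c₂ hc₂ d hd)
      rcases h1 with h1 | h1
      · exact hd1 h1
      rcases h2 with h2 | h2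
      · exact hd1 (hP.symm ▸ h2)
      · have hin : π₃ ⊓ π₃ = π₃ := inf_idem π₃
        have hint : c₁.plane ⊓ c₂.plane = l :=
          planes_inter hl c₁.plane_rank c₂.plane_rank hlπ1 hlπ2 hπne
        have : d.pt ≤ l := by rw [← hint]; exact le_inf h1 h2
        exact hptl d hskew this
    have h3 := hmemS c₃ hc₃M rfl
    have h1' := hmemS c₁ hc₁ hl₁
    have h2' := hmemS c₂ hc₂ hl₂
    have hne31 : c₃ ≠ c₁ := fun h => hπ₃1 (congrArg Chamber.plane h)
    have hne32 : c₃ ≠ c₂ := fun h => hπ₃2 (congrArg Chamber.plane h)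
    rcases h3 with h3 | h3 <;> rcases h1' with h1' | h1' <;> rcases h2' with h2' | h2' <;>
      first
        | exact hne (h1'.trans h2'.symm)
        | exact hne31 (h3.trans h1'.symm)
        | exact hne32 (h3.trans h2'.symm)
  have hπne : c₁.plane ≠ c₂.plane := by
    intro hπ
    obtain ⟨P₃, hP₃r, hP₃l, hP₃1, hP₃2⟩ :=
      third_point hl c₁.pt_rank c₂.pt_rank hP1l hP2l hPne
    let c₃ : Chamber F := ⟨P₃, l, c₁.plane, hP₃r, hl, c₁.plane_rank, hP₃l, hlπ1⟩
    have hc₃M : c₃ ∈ M := by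
      apply hM.2
      intro d hd
      rintro ⟨hd1, hd2, hd3⟩
      have hskew : d.line ⊓ l = ⊥ := by rw [inf_comm]; exact hd3
      have h1 := hno d hd c₁ hl₁ hskew (hind c₁ hc₁ d hd)
      have h2 := hno d hd c₂ hl₂ hskew (hind c₂ hc₂ d hd)
      rcases h1 with h1 | h1
      swap
      · exact hd2 h1
      rcases h2 with h2 | h2
      swap
      · exact hd2 (by rw [hπ]; exact h2)
      · have hsup : c₁.pt ⊔ c₂.pt = l :=
          points_sup hl c₁.pt_rank c₂.pt_rank hP1l hP2l hPne
        have hll : l ≤ d.plane := by rw [← hsup]; exact sup_le h1 h2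
        exact lines_in_plane_meet d.line_rank hl d.plane_rank d.line_le_plane hll hskew
    have h3 := hmemS c₃ hc₃M rfl
    have h1' := hmemS c₁ hc₁ hl₁
    have h2' := hmemS c₂ hc₂ hl₂
    have hne31 : c₃ ≠ c₁ := fun h => hP₃1 (congrArg Chamber.pt h)
    have hne32 : c₃ ≠ c₂ := fun h => hP₃2 (congrArg Chamber.pt h)
    rcases h3 with h3 | h3 <;> rcases h1' with h1' | h1' <;> rcases h2' with h2' | h2' <;>
      first
        | exact hne (h1'.trans h2'.symm)
        | exact hne31 (h3.trans h1'.symm)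
        | exact hne32 (h3.trans h2'.symm)
  refine ⟨hPne, hπne, ?_⟩
  intro c hc hskew
  have h1 := hno c hc c₁ hl₁ hskew (hind c₁ hc₁ c hc)
  have h2 := hno c hc c₂ hl₂ hskew (hind c₂ hc₂ c hc)
  rcases h1 with h1 | h1 <;> rcases h2 with h2 | h2
  · exfalso
    have hsup : c₁.pt ⊔ c₂.pt = l :=
      points_sup hl c₁.pt_rank c₂.pt_rank hP1l hP2l hPne
    have hll : l ≤ c.plane := by rw [← hsup]; exact sup_le h1 h2
    exact lines_in_plane_meet c.line_rank hl c.plane_rank c.line_le_plane hll hskew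
  · exact Or.inl ⟨h1, h2⟩
  · exact Or.inr ⟨h2, h1⟩
  · exfalso
    have hint : c₁.plane ⊓ c₂.plane = l :=
      planes_inter hl c₁.plane_rank c₂.plane_rank hlπ1 hlπ2 hπne
    have : c.pt ≤ l := by rw [← hint]; exact le_inf h1 h2
    exact hptl c hskew this
end

section
/- Let M be a maximal independent set of the Kneser graph on chambers of PG(3,q). Then the number of lines of M-weight (q+1)^2 is at most 1, or exactly q+1 (and these lines form a pencil: they share a common point and a common plane), or exactly q^2+q+1 (and there is a point or a plane incident with all of them). -/
open Submodule

open Submodule Module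

section Geo
variable {F : Type} [Field F]

local notation "V" => (Fin 4 → F)

lemma frV : finrank F V = 4 := by simp

lemma rank1_exists_gen {P : Submodule F V} (hP : finrank F P = 1) :
    ∃ u, u ∈ P ∧ u ≠ 0 ∧ P = span F {u} := by
  have hnb : P ≠ ⊥ := by
    intro h; rw [h] at hP; simp at hP
  obtain ⟨u, hu, hne⟩ := P.ne_bot_iff.mp hnb
  refine ⟨u, hu, hne, ?_⟩
  refine (Submodule.eq_of_le_of_finrank_le ?_ ?_).symm
  · rwa [span_le, Set.singleton_subset_iff]
  · rw [hP, finrank_span_singleton hne]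

lemma eq_of_le_rank1 {N P : Submodule F V} (hP : finrank F P = 1) (hle : N ≤ P)
    (hnb : N ≠ ⊥) : N = P := by
  refine Submodule.eq_of_le_of_finrank_le hle ?_
  rw [hP]
  have : Nontrivial N := Submodule.nontrivial_iff_ne_bot.mpr hnb
  exact (Module.finrank_pos_iff (R := F)).mpr this

lemma rank1_le_iff_ne_bot_inf {P A : Submodule F V} (hP : finrank F P = 1) :
    ¬ P ≤ A → P ⊓ A = ⊥ := by
  intro h
  by_contra hb
  have := eq_of_le_rank1 hP inf_le_left hb
  exact h (this ▸ inf_le_right)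

lemma lines_meet {l l' π : Submodule F V} (hl : finrank F l = 2) (hl' : finrank F l' = 2)
    (hπ : finrank F π = 3) (h1 : l ≤ π) (h2 : l' ≤ π) : l ⊓ l' ≠ ⊥ := by
  intro hb
  have hs := Submodule.finrank_sup_add_finrank_inf_eq l l'
  rw [hb, finrank_bot, hl, hl'] at hs
  have hle : l ⊔ l' ≤ π := sup_le h1 h2
  have := Submodule.finrank_mono hle
  omega

lemma exists_pt_on_off {l A : Submodule F V} (hl : finrank F l = 2) (h : ¬ l ≤ A) :
    ∃ P : Submodule F V, finrank F P = 1 ∧ P ≤ l ∧ ¬ P ≤ A := by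
  obtain ⟨v, hv, hvA⟩ := SetLike.not_le_iff_exists.mp h
  have hvne : v ≠ 0 := by rintro rfl; exact hvA (zero_mem A)
  refine ⟨span F {v}, finrank_span_singleton hvne, ?_, ?_⟩
  · rwa [span_le, Set.singleton_subset_iff]
  · intro hle
    exact hvA (hle (subset_span rfl))

lemma sup_pt_rank {l Q : Submodule F V} (hl : finrank F l = 2) (hQ : finrank F Q = 1)
    (h : ¬ Q ≤ l) : finrank F (l ⊔ Q : Submodule F V) = 3 := by
  have hb : Q ⊓ l = ⊥ := rank1_le_iff_ne_bot_inf hQ h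
  have hs := Submodule.finrank_sup_add_finrank_inf_eq l Q
  rw [inf_comm, hb, finrank_bot, hl, hQ] at hs
  omega

lemma exists_plane_avoiding {l Q : Submodule F V} (hl : finrank F l = 2)
    (hQ : finrank F Q = 1) (h : ¬ Q ≤ l) :
    ∃ π : Submodule F V, finrank F π = 3 ∧ l ≤ π ∧ ¬ Q ≤ π := by
  have hB : finrank F (l ⊔ Q : Submodule F V) = 3 := sup_pt_rank hl hQ h
  have hBne : (l ⊔ Q : Submodule F V) ≠ ⊤ := by
    intro ht; rw [ht] at hB; rw [finrank_top, frV] at hB; omega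
  obtain ⟨v, -, hvB⟩ := SetLike.exists_of_lt (show (l ⊔ Q : Submodule F V) < ⊤ from Ne.lt_top hBne)
  have hvne : v ≠ 0 := by rintro rfl; exact hvB (zero_mem _)
  have hvl : ¬ (span F {v} : Submodule F V) ≤ l := by
    intro hle
    exact hvB (Submodule.mem_sup_left (hle (subset_span rfl)))
  refine ⟨l ⊔ span F {v}, sup_pt_rank hl (finrank_span_singleton hvne) hvl, le_sup_left, ?_⟩
  intro hle
  obtain ⟨u, hu, hune, hspan⟩ := rank1_exists_gen hQ
  have hu' : u ∈ l ⊔ span F {v} := hle hu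
  rw [Submodule.mem_sup] at hu'
  obtain ⟨w, hw, z, hz, huwz⟩ := hu'
  rw [Submodule.mem_span_singleton] at hz
  obtain ⟨c, rfl⟩ := hz
  by_cases hc : c = 0
  · subst hc
    rw [zero_smul, add_zero] at huwz
    have : u ∈ l := huwz ▸ hw
    exact h (hspan ▸ (span_le.mpr (Set.singleton_subset_iff.mpr this)))
  · have hvmem : v ∈ (l ⊔ Q : Submodule F V) := by
      have : v = c⁻¹ • (u - w) := by
        rw [← huwz]; simp [smul_smul, inv_mul_cancel₀ hc]
      rw [this]
      exact smul_mem _ _ (sub_mem (Submodule.mem_sup_right hu) (Submodule.mem_sup_left hw))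
    exact hvB hvmem

lemma exists_plane {l : Submodule F V} (hl : finrank F l = 2) :
    ∃ π : Submodule F V, finrank F π = 3 ∧ l ≤ π := by
  have hlne : l ≠ ⊤ := by
    intro ht; rw [ht, finrank_top, frV] at hl; omega
  obtain ⟨v, -, hv2⟩ := SetLike.exists_of_lt (show l < (⊤ : Submodule F V) from Ne.lt_top hlne)
  have hvne : v ≠ 0 := by rintro rfl; exact hv2 (zero_mem _)
  have hvl : ¬ (span F {v} : Submodule F V) ≤ l := fun hle => hv2 (hle (subset_span rfl))
  exact ⟨l ⊔ span F {v}, sup_pt_rank hl (finrank_span_singleton hvne) hvl, le_sup_left⟩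

lemma exists_pt_on {l : Submodule F V} (hl : finrank F l = 2) :
    ∃ P : Submodule F V, finrank F P = 1 ∧ P ≤ l := by
  have : l ≠ ⊥ := by intro h; rw [h, finrank_bot] at hl; omega
  obtain ⟨v, hv, hvne⟩ := l.ne_bot_iff.mp this
  exact ⟨span F {v}, finrank_span_singleton hvne,
    span_le.mpr (Set.singleton_subset_iff.mpr hv)⟩

lemma exists_chamber {l : Submodule F V} (hl : finrank F l = 2) :
    ∃ P π : Submodule F V, finrank F P = 1 ∧ finrank F π = 3 ∧ P ≤ l ∧ l ≤ π := by
  obtain ⟨P, hP, hPl⟩ := exists_pt_on hl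
  obtain ⟨π, hπ, hlπ⟩ := exists_plane hl
  exact ⟨P, π, hP, hπ, hPl, hlπ⟩

lemma line_inf_plane {l π : Submodule F V} (hl : finrank F l = 2) (hπ : finrank F π = 3)
    (h : ¬ l ≤ π) : finrank F (l ⊓ π : Submodule F V) = 1 := by
  have hs := Submodule.finrank_sup_add_finrank_inf_eq l π
  have h4 : finrank F (l ⊔ π : Submodule F V) ≤ 4 :=
    (Submodule.finrank_le _).trans_eq frV
  have hlt : l ⊓ π < l := lt_of_le_of_ne inf_le_left (fun he => h (he ▸ inf_le_right))
  have := Submodule.finrank_lt_finrank_of_lt hlt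
  omega

end Geo

open Submodule Module

section Count
variable {F : Type} [Field F] [Fintype F]

lemma span_eq_of_mem_rank1 {W : Type} [AddCommGroup W] [Module F W] [FiniteDimensional F W]
    {P : Submodule F W} (hP : finrank F P = 1) {u : W} (hu : u ∈ P) (hune : u ≠ 0) :
    span F {u} = P := by
  refine Submodule.eq_of_le_of_finrank_le (span_le.mpr (Set.singleton_subset_iff.mpr hu)) ?_
  rw [hP, finrank_span_singleton hune]

lemma card_nonzero {W : Type} [AddCommGroup W] [Module F W] [Finite W] (U : Submodule F W) :
    Nat.card {v : W // v ∈ U ∧ v ≠ 0} = Fintype.card F ^ finrank F U - 1 := by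
  classical
  cases nonempty_fintype W
  have e : {v : W // v ∈ U ∧ v ≠ 0} ≃ {u : U // ¬ (u = 0)} :=
    { toFun := fun v => ⟨⟨v.1, v.2.1⟩, by
        simp only [Submodule.mk_eq_zero]; exact v.2.2⟩
      invFun := fun u => ⟨u.1.1, u.1.2, by
        intro h; exact u.2 (Subtype.ext h)⟩
      left_inv := fun v => rfl
      right_inv := fun u => rfl }
  rw [Nat.card_congr e, Nat.card_eq_fintype_card, Fintype.card_subtype_compl,
    Fintype.card_subtype_eq (0 : U)]
  have := card_eq_pow_finrank (K := F) (V := U)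
  omega

lemma rank1_count {W : Type} [AddCommGroup W] [Module F W] [Finite W] (U : Submodule F W) :
    {P : Submodule F W | finrank F P = 1 ∧ P ≤ U}.ncard * (Fintype.card F - 1)
      = Fintype.card F ^ finrank F U - 1 := by
  classical
  have hfinsub : Finite (Submodule F W) :=
    Finite.of_injective (fun P => (P : Set W)) SetLike.coe_injective
  set S := {P : Submodule F W | finrank F P = 1 ∧ P ≤ U} with hS
  have hmem : ∀ v : {v : W // v ∈ U ∧ v ≠ 0}, span F {v.1} ∈ S := fun v =>
    ⟨finrank_span_singleton v.2.2, span_le.mpr (Set.singleton_subset_iff.mpr v.2.1)⟩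
  let f : {v : W // v ∈ U ∧ v ≠ 0} → S := fun v => ⟨span F {v.1}, hmem v⟩
  have e := Equiv.sigmaFiberEquiv f
  have efib : ∀ P : S, {v : {v : W // v ∈ U ∧ v ≠ 0} // f v = P}
      ≃ {u : W // u ∈ P.1 ∧ u ≠ 0} := fun P =>
    { toFun := fun v => ⟨v.1.1, by
        have : span F {v.1.1} = P.1 := congrArg Subtype.val v.2
        exact this ▸ subset_span rfl, v.1.2.2⟩
      invFun := fun u => ⟨⟨u.1, P.2.2 u.2.1, u.2.2⟩, by
        apply Subtype.ext
        exact span_eq_of_mem_rank1 P.2.1 u.2.1 u.2.2⟩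
      left_inv := fun v => by apply Subtype.ext; apply Subtype.ext; rfl
      right_inv := fun u => rfl }
  cases nonempty_fintype W
  haveI : Fintype S := Fintype.ofFinite _
  have h1 : Nat.card {v : W // v ∈ U ∧ v ≠ 0} = ∑ P : S, Nat.card {u : W // u ∈ P.1 ∧ u ≠ 0} := by
    rw [← Nat.card_congr e]
    rw [Nat.card_eq_fintype_card, Fintype.card_sigma]
    congr 1
    ext P
    rw [← Nat.card_eq_fintype_card, Nat.card_congr (efib P)]
  rw [card_nonzero] at h1
  have h2 : ∀ P : S, Nat.card {u : W // u ∈ P.1 ∧ u ≠ 0} = Fintype.card F - 1 := by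
    intro P
    rw [card_nonzero, P.2.1, pow_one]
  simp only [h2, Finset.sum_const, Finset.card_univ, smul_eq_mul] at h1
  rw [← Nat.card_coe_set_eq, Nat.card_eq_fintype_card]
  omega

end Count

section Transfer
variable {F : Type} [Field F] [Fintype F]
variable {M : Type} [AddCommGroup M] [Module F M] [Finite M]

lemma q_ge_two : 2 ≤ Fintype.card F := Fintype.one_lt_card

lemma rank1_count2 (U : Submodule F M) (h : finrank F U = 2) :
    {P : Submodule F M | finrank F P = 1 ∧ P ≤ U}.ncard = Fintype.card F + 1 := by
  have h1 := rank1_count U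
  rw [h] at h1
  have hq := q_ge_two (F := F)
  have hid : (Fintype.card F + 1) * (Fintype.card F - 1) = Fintype.card F ^ 2 - 1 := by
    obtain ⟨r, hr⟩ : ∃ r, Fintype.card F = r + 1 := ⟨Fintype.card F - 1, by omega⟩
    rw [hr]
    have : (r + 1) ^ 2 = r * r + 2 * r + 1 := by ring
    rw [this]
    simp
    ring
  rw [← hid] at h1
  exact Nat.eq_of_mul_eq_mul_right (by omega) h1

lemma rank1_count3 (U : Submodule F M) (h : finrank F U = 3) :
    {P : Submodule F M | finrank F P = 1 ∧ P ≤ U}.ncard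
      = Fintype.card F ^ 2 + Fintype.card F + 1 := by
  have h1 := rank1_count U
  rw [h] at h1
  have hq := q_ge_two (F := F)
  have hid : (Fintype.card F ^ 2 + Fintype.card F + 1) * (Fintype.card F - 1)
      = Fintype.card F ^ 3 - 1 := by
    obtain ⟨r, hr⟩ : ∃ r, Fintype.card F = r + 1 := ⟨Fintype.card F - 1, by omega⟩
    rw [hr]
    have h3 : (r + 1) ^ 3 = ((r+1)^2 + (r+1) + 1) * r + 1 := by ring
    rw [h3]
    simp
  rw [← hid] at h1
  exact Nat.eq_of_mul_eq_mul_right (by omega) h1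

lemma ker_le_comap (X : Submodule F M) (p' : Submodule F (M ⧸ X)) :
    X ≤ comap X.mkQ p' := fun x hx => by
  simp only [Submodule.mem_comap, Submodule.mkQ_apply]
  rw [(Submodule.Quotient.mk_eq_zero X).mpr hx]
  exact zero_mem _

lemma ncard_eq_of_equiv {α β : Type*} (s : Set α) (t : Set β) (e : ↥s ≃ ↥t) :
    s.ncard = t.ncard := by
  rw [← Nat.card_coe_set_eq, ← Nat.card_coe_set_eq]
  exact Nat.card_congr e

lemma finrank_comap_mkQ (X : Submodule F M) (p' : Submodule F (M ⧸ X)) :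
    finrank F (comap X.mkQ p') = finrank F p' + finrank F X := by
  have hker : X ≤ comap X.mkQ p' := ker_le_comap X p'
  have h1 := LinearMap.finrank_range_add_finrank_ker (X.mkQ.domRestrict (comap X.mkQ p'))
  rw [LinearMap.range_domRestrict, LinearMap.ker_domRestrict] at h1
  have h2 : (comap X.mkQ p').map X.mkQ = p' := by
    rw [Submodule.map_comap_eq, Submodule.range_mkQ, top_inf_eq]
  rw [h2, X.ker_mkQ] at h1
  have h3 : finrank F (comap (comap X.mkQ p').subtype X) = finrank F X :=
    (Submodule.comapSubtypeEquivOfLe hker).finrank_eq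
  rw [h3] at h1
  omega

lemma finrank_map_mkQ {X B : Submodule F M} (h : X ≤ B) :
    finrank F (map X.mkQ B) + finrank F X = finrank F B := by
  have h1 := finrank_comap_mkQ X (map X.mkQ B)
  have h2 : comap X.mkQ (map X.mkQ B) = B := by
    rw [Submodule.comap_map_eq, X.ker_mkQ, sup_eq_left.mpr h]
  rw [h2] at h1
  omega

lemma ncard_quot (X B : Submodule F M) (k : ℕ) (hXB : X ≤ B) :
    {m : Submodule F M | finrank F m = k + finrank F X ∧ X ≤ m ∧ m ≤ B}.ncard
      = {p' : Submodule F (M ⧸ X) | finrank F p' = k ∧ p' ≤ map X.mkQ B}.ncard := by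
  refine ncard_eq_of_equiv _ _ ?_
  refine
    { toFun := fun m => ⟨map X.mkQ m.1, ?_, Submodule.map_mono m.2.2.2⟩
      invFun := fun p' => ⟨comap X.mkQ p'.1, ?_, ?_, ?_⟩
      left_inv := ?_
      right_inv := ?_ }
  · -- finrank of map = k
    have h2 : comap X.mkQ (map X.mkQ m.1) = m.1 := by
      rw [Submodule.comap_map_eq, X.ker_mkQ, sup_eq_left.mpr m.2.2.1]
    have h1 := finrank_comap_mkQ X (map X.mkQ m.1)
    rw [h2, m.2.1] at h1
    omega
  · have := finrank_comap_mkQ X p'.1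
    rw [p'.2.1] at this
    omega
  · exact ker_le_comap X p'.1
  · have := Submodule.comap_mono (f := X.mkQ) p'.2.2
    rwa [Submodule.comap_map_eq, X.ker_mkQ, sup_eq_left.mpr hXB] at this
  · intro m
    apply Subtype.ext
    show comap X.mkQ (map X.mkQ m.1) = m.1
    rw [Submodule.comap_map_eq, X.ker_mkQ, sup_eq_left.mpr m.2.2.1]
  · intro p'
    apply Subtype.ext
    show map X.mkQ (comap X.mkQ p'.1) = p'.1
    rw [Submodule.map_comap_eq, Submodule.range_mkQ, top_inf_eq]

end Transfer

section DualCount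
variable {F : Type} [Field F] [Fintype F]
variable {M : Type} [AddCommGroup M] [Module F M] [Finite M]

lemma ncard_rank2_le (B : Submodule F M) (hB : finrank F B = 3) :
    {m : Submodule F M | finrank F m = 2 ∧ m ≤ B}.ncard
      = Fintype.card F ^ 2 + Fintype.card F + 1 := by
  classical
  haveI : Finite (Module.Dual F ↥B) :=
    Finite.of_injective _ (DFunLike.coe_injective (F := Module.Dual F ↥B))
  -- step 1 : lines inside B correspond to rank-2 subspaces of B
  have e1 : ↥{m : Submodule F M | finrank F m = 2 ∧ m ≤ B}
      ≃ ↥{W : Submodule F ↥B | finrank F W = 2} :=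
    { toFun := fun m => ⟨comap B.subtype m.1, by
        have hmap : map B.subtype (comap B.subtype m.1) = m.1 := by
          rw [Submodule.map_comap_subtype, inf_eq_right.mpr m.2.2]
        have := Submodule.finrank_map_subtype_eq B (comap B.subtype m.1)
        rw [hmap, m.2.1] at this
        exact this.symm⟩
      invFun := fun W => ⟨map B.subtype W.1, by
        rw [Submodule.finrank_map_subtype_eq]; exact W.2, map_subtype_le B W.1⟩
      left_inv := fun m => by
        apply Subtype.ext
        show map B.subtype (comap B.subtype m.1) = m.1
        rw [Submodule.map_comap_subtype, inf_eq_right.mpr m.2.2]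
      right_inv := fun W => by
        apply Subtype.ext
        show comap B.subtype (map B.subtype W.1) = W.1
        rw [Submodule.comap_map_eq, Submodule.ker_subtype, sup_bot_eq] }
  -- step 2 : rank-2 subspaces of B correspond to rank-1 subspaces of the dual
  have frB : finrank F ↥B = 3 := hB
  have e2 : ↥{W : Submodule F ↥B | finrank F W = 2}
      ≃ ↥{Φ : Submodule F (Module.Dual F ↥B) | finrank F Φ = 1 ∧ Φ ≤ ⊤} :=
    { toFun := fun W => ⟨W.1.dualAnnihilator, by
        have h1 := Subspace.finrank_add_finrank_dualCoannihilator_eq W.1.dualAnnihilator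
        rw [Subspace.dualAnnihilator_dualCoannihilator_eq, W.2, frB] at h1
        omega, le_top⟩
      invFun := fun Φ => ⟨Φ.1.dualCoannihilator, by
        show finrank F _ = 2
        have h1 := Subspace.finrank_add_finrank_dualCoannihilator_eq Φ.1
        rw [Φ.2.1, frB] at h1
        omega⟩
      left_inv := fun W => Subtype.ext (Subspace.dualAnnihilator_dualCoannihilator_eq)
      right_inv := fun Φ => Subtype.ext (Subspace.dualCoannihilator_dualAnnihilator_eq) }
  rw [ncard_eq_of_equiv _ _ (e1.trans e2)]
  have hdual : finrank F (⊤ : Submodule F (Module.Dual F ↥B)) = 3 := by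
    rw [finrank_top, Subspace.dual_finrank_eq, frB]
  exact rank1_count3 _ hdual

end DualCount

section VSpec
variable {F : Type} [Field F] [Fintype F]

local notation "V" => (Fin 4 → F)

lemma finV : Finite (Submodule F V) :=
  Finite.of_injective (fun P => (P : Set (Fin 4 → F))) SetLike.coe_injective

lemma finrank_quot (X : Submodule F V) :
    finrank F ((Fin 4 → F) ⧸ X) + finrank F X = 4 := by
  have := Submodule.finrank_quotient_add_finrank X
  rw [frV] at this
  exact this

lemma finQuot (X : Submodule F V) : Finite ((Fin 4 → F) ⧸ X) :=
  Finite.of_surjective X.mkQ (Submodule.mkQ_surjective X)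

lemma ncard_planes_through {l : Submodule F V} (hl : finrank F l = 2) :
    {π : Submodule F V | finrank F π = 3 ∧ l ≤ π}.ncard = Fintype.card F + 1 := by
  haveI := finQuot l
  have hset : {π : Submodule F V | finrank F π = 3 ∧ l ≤ π}
      = {m : Submodule F V | finrank F m = 1 + finrank F l ∧ l ≤ m ∧ m ≤ ⊤} := by
    ext m
    simp only [Set.mem_setOf_eq, hl, le_top, and_true]
  rw [hset, ncard_quot l ⊤ 1 le_top]
  have hmt : map l.mkQ ⊤ = ⊤ := by rw [Submodule.map_top, Submodule.range_mkQ]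
  rw [hmt]
  apply rank1_count2
  have := finrank_quot l
  rw [hl] at this
  rw [finrank_top]
  omega

lemma ncard_lines_through {X : Submodule F V} (hX : finrank F X = 1) :
    {m : Submodule F V | finrank F m = 2 ∧ X ≤ m}.ncard
      = Fintype.card F ^ 2 + Fintype.card F + 1 := by
  haveI := finQuot X
  have hset : {m : Submodule F V | finrank F m = 2 ∧ X ≤ m}
      = {m : Submodule F V | finrank F m = 1 + finrank F X ∧ X ≤ m ∧ m ≤ ⊤} := by
    ext m
    simp only [Set.mem_setOf_eq, hX, le_top, and_true]
  rw [hset, ncard_quot X ⊤ 1 le_top]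
  have hmt : map X.mkQ ⊤ = ⊤ := by rw [Submodule.map_top, Submodule.range_mkQ]
  rw [hmt]
  apply rank1_count3
  have := finrank_quot X
  rw [hX] at this
  rw [finrank_top]
  omega

lemma ncard_pencil {X B : Submodule F V} (hX : finrank F X = 1) (hB : finrank F B = 3)
    (hXB : X ≤ B) :
    {m : Submodule F V | finrank F m = 2 ∧ X ≤ m ∧ m ≤ B}.ncard = Fintype.card F + 1 := by
  haveI := finQuot X
  have hset : {m : Submodule F V | finrank F m = 2 ∧ X ≤ m ∧ m ≤ B}
      = {m : Submodule F V | finrank F m = 1 + finrank F X ∧ X ≤ m ∧ m ≤ B} := by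
    ext m; rw [hX]
  rw [hset, ncard_quot X B 1 hXB]
  apply rank1_count2
  have := finrank_map_mkQ hXB
  rw [hX, hB] at this
  omega

end VSpec


section ChamberAux
variable {F : Type} [Field F] [Fintype F]

local notation "V" => (Fin 4 → F)

lemma chamber_injective : Function.Injective
    (fun c : Chamber F => (c.pt, c.line, c.plane)) := by
  rintro ⟨p1, l1, pl1, _, _, _, _, _⟩ ⟨p2, l2, pl2, _, _, _, _, _⟩ h
  simp only [Prod.mk.injEq] at h
  obtain ⟨h1, h2, h3⟩ := h
  subst h1; subst h2; subst h3
  rfl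

lemma finChamber : Finite (Chamber F) := by
  haveI := finV (F := F)
  exact Finite.of_injective _ chamber_injective

lemma exists_chamber_on {l : Submodule F V} (hl : finrank F l = 2) :
    ∃ c : Chamber F, c.line = l := by
  obtain ⟨P, π, hP, hπ, h1, h2⟩ := exists_chamber hl
  exact ⟨⟨P, l, π, hP, hl, hπ, h1, h2⟩, rfl⟩

lemma ncard_chambers_on {l : Submodule F V} (hl : finrank F l = 2) :
    {c : Chamber F | c.line = l}.ncard = (Fintype.card F + 1)^2 := by
  have e : ↥{c : Chamber F | c.line = l}
      ≃ ↥{P : Submodule F V | finrank F P = 1 ∧ P ≤ l}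
        × ↥{π : Submodule F V | finrank F π = 3 ∧ l ≤ π} :=
    { toFun := fun c => (⟨c.1.pt, c.1.pt_rank, le_trans c.1.pt_le_line (le_of_eq c.2)⟩,
        ⟨c.1.plane, c.1.plane_rank, le_trans (le_of_eq c.2.symm) c.1.line_le_plane⟩)
      invFun := fun x => ⟨⟨x.1.1, l, x.2.1, x.1.2.1, hl, x.2.2.1, x.1.2.2, x.2.2.2⟩, rfl⟩
      left_inv := fun c => by
        obtain ⟨⟨p, m, pl, h1, h2, h3, h4, h5⟩, hc⟩ := c
        have hml : m = l := hc
        subst hml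
        rfl
      right_inv := fun x => rfl }
  rw [← Nat.card_coe_set_eq, Nat.card_congr e, Nat.card_prod,
    Nat.card_coe_set_eq, Nat.card_coe_set_eq]
  rw [rank1_count2 l hl, ncard_planes_through hl]
  ring

def FullLine (M : Set (Chamber F)) (l : Submodule F V) : Prop :=
  ∀ c : Chamber F, c.line = l → c ∈ M

lemma wLine_eq_iff {M : Set (Chamber F)} {l : Submodule F V} (hl : finrank F l = 2) :
    wLine M l = (Fintype.card F + 1)^2 ↔ FullLine M l := by
  haveI := finChamber (F := F)
  unfold wLine
  constructor
  · intro hw c hc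
    have hsub : {c ∈ M | c.line = l} ⊆ {c : Chamber F | c.line = l} := fun x hx => hx.2
    have heq := Set.eq_of_subset_of_ncard_le hsub
      (by rw [ncard_chambers_on hl, ← hw]) (Set.toFinite _)
    have hmem : c ∈ {c ∈ M | c.line = l} := by rw [heq]; exact hc
    exact hmem.1
  · intro hfull
    have hseteq : {c ∈ M | c.line = l} = {c : Chamber F | c.line = l} := by
      ext c; exact ⟨fun h => h.2, fun h => ⟨hfull c h, h⟩⟩
    rw [hseteq, ncard_chambers_on hl]

lemma full_meets {M : Set (Chamber F)} (hind : IsIndep M) {l : Submodule F V}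
    (hl : finrank F l = 2) (hfull : FullLine M l) {d : Chamber F} (hd : d ∈ M) :
    l ⊓ d.line ≠ ⊥ := by
  intro hbot
  have hlp : ¬ l ≤ d.plane := fun hle =>
    lines_meet hl d.line_rank d.plane_rank hle d.line_le_plane hbot
  obtain ⟨P, hP1, hPl, hPd⟩ := exists_pt_on_off hl hlp
  have hdptl : ¬ d.pt ≤ l := by
    intro hle
    have h2 : d.pt ≤ l ⊓ d.line := le_inf hle d.pt_le_line
    rw [hbot, le_bot_iff] at h2
    have h3 := d.pt_rank
    rw [h2] at h3
    simp at h3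
  obtain ⟨π', hπ'3, hlπ', hπ'pt⟩ := exists_plane_avoiding hl d.pt_rank hdptl
  exact hind ⟨P, l, π', hP1, hl, hπ'3, hPl, hlπ'⟩ (hfull _ rfl) d hd ⟨hPd, hπ'pt, hbot⟩

end ChamberAux

/-- The number of lines of `M`-weight `(q+1)^2` is at most `1`, or exactly `q+1`
(forming a pencil), or exactly `q^2+q+1` (all incident with a common point or plane). -/

theorem big_lines_trichotomy {F : Type} [Field F] [Fintype F] {q : ℕ}
    (hq : Fintype.card F = q)
    (M : Set (Chamber F)) (hM : IsMaxIndep M) :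
    letI W := {l : Submodule F (Fin 4 → F) |
      Module.finrank F l = 2 ∧ wLine M l = (q + 1)^2}
    W.ncard ≤ 1 ∨
    (W.ncard = q + 1 ∧ ∃ P π : Submodule F (Fin 4 → F),
      Module.finrank F P = 1 ∧ Module.finrank F π = 3 ∧
      ∀ l ∈ W, P ≤ l ∧ l ≤ π) ∨
    (W.ncard = q^2 + q + 1 ∧ ∃ x : Submodule F (Fin 4 → F),
      (Module.finrank F x = 1 ∨ Module.finrank F x = 3) ∧
      ∀ l ∈ W, x ≤ l ∨ l ≤ x) := by
  subst hq
  haveI := finChamber (F := F)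
  haveI := finV (F := F)
  set W : Set (Submodule F (Fin 4 → F)) := {l : Submodule F (Fin 4 → F) |
      Module.finrank F l = 2 ∧ wLine M l = (Fintype.card F + 1)^2} with hWdef
  show W.ncard ≤ 1 ∨ _ ∨ _
  have hWfull : ∀ l, l ∈ W ↔ finrank F l = 2 ∧ FullLine M l := by
    intro l
    constructor
    · rintro ⟨h2, hw⟩; exact ⟨h2, (wLine_eq_iff h2).mp hw⟩
    · rintro ⟨h2, hf⟩; exact ⟨h2, (wLine_eq_iff h2).mpr hf⟩
  by_cases hsmall : W.ncard ≤ 1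
  · exact Or.inl hsmall
  right
  have hWfin : W.Finite := Set.toFinite _
  obtain ⟨l1, hl1W, l2, hl2W, hne⟩ := (Set.one_lt_ncard hWfin).mp (by omega)
  obtain ⟨hl1r, hl1f⟩ := (hWfull l1).mp hl1W
  obtain ⟨hl2r, hl2f⟩ := (hWfull l2).mp hl2W
  obtain ⟨d2, hd2l⟩ := exists_chamber_on hl2r
  have hd2M : d2 ∈ M := hl2f d2 hd2l
  have hXne : l1 ⊓ l2 ≠ ⊥ := by
    have h := full_meets hM.1 hl1r hl1f hd2M
    rwa [hd2l] at h
  set X := l1 ⊓ l2 with hXdef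
  have hXl1 : X ≤ l1 := inf_le_left
  have hXl2 : X ≤ l2 := inf_le_right
  have hXlt : X < l1 := by
    refine lt_of_le_of_ne hXl1 ?_
    intro h
    rw [hXdef] at h
    have hle : l1 ≤ l2 := inf_eq_left.mp h
    exact hne (Submodule.eq_of_le_of_finrank_eq hle (by rw [hl1r, hl2r]))
  have hX1 : finrank F X = 1 := by
    have hlt := Submodule.finrank_lt_finrank_of_lt hXlt
    have hnt : Nontrivial X := Submodule.nontrivial_iff_ne_bot.mpr hXne
    have hpos : 0 < finrank F X := Module.finrank_pos_iff.mpr hnt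
    rw [hl1r] at hlt
    omega
  set π := l1 ⊔ l2 with hπdef
  have hπ3 : finrank F π = 3 := by
    have hs := Submodule.finrank_sup_add_finrank_inf_eq l1 l2
    rw [hl1r, hl2r, ← hXdef, hX1, ← hπdef] at hs
    omega
  have hl1π : l1 ≤ π := le_sup_left
  have hl2π : l2 ≤ π := le_sup_right
  have hXπ : X ≤ π := hXl1.trans hl1π
  have hB : ∀ d ∈ M, d.line ≤ π ∨ X ≤ d.line := by
    intro d hd
    by_cases hdπ : d.line ≤ π
    · exact Or.inl hdπ
    right
    have hd1 : l1 ⊓ d.line ≠ ⊥ := full_meets hM.1 hl1r hl1f hd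
    have hd2' : l2 ⊓ d.line ≠ ⊥ := full_meets hM.1 hl2r hl2f hd
    have hdl : finrank F (d.line ⊓ π : Submodule F (Fin 4 → F)) = 1 :=
      line_inf_plane d.line_rank hπ3 hdπ
    have e1 : d.line ⊓ l1 = d.line ⊓ π :=
      eq_of_le_rank1 hdl (inf_le_inf_left _ hl1π) (by rwa [inf_comm] at hd1)
    have e2 : d.line ⊓ l2 = d.line ⊓ π :=
      eq_of_le_rank1 hdl (inf_le_inf_left _ hl2π) (by rwa [inf_comm] at hd2')
    have hle : d.line ⊓ π ≤ X := by
      rw [hXdef]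
      exact le_inf (e1 ▸ inf_le_right) (e2 ▸ inf_le_right)
    have heq : d.line ⊓ π = X := eq_of_le_rank1 hX1 hle (by rw [← e1]; rwa [inf_comm] at hd1)
    exact le_trans (le_of_eq heq.symm) inf_le_left
  by_cases hall : ∀ l ∈ W, l ≤ π
  · by_cases hallX : ∀ l ∈ W, X ≤ l
    · -- pencil case
      have hWeq : W = {m : Submodule F (Fin 4 → F) | finrank F m = 2 ∧ X ≤ m ∧ m ≤ π} := by
        ext m
        constructor
        · intro hmW
          exact ⟨((hWfull m).mp hmW).1, hallX m hmW, hall m hmW⟩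
        · rintro ⟨hmr, hXm, hmπ⟩
          refine (hWfull m).mpr ⟨hmr, fun c hc => hM.2 c fun d hd hopp => ?_⟩
          rcases hB d hd with h | h
          · have hcπ : c.line ≤ π := by rw [hc]; exact hmπ
            exact lines_meet c.line_rank d.line_rank hπ3 hcπ h hopp.2.2
          · have hXc : X ≤ c.line := by rw [hc]; exact hXm
            have hXb : X ≤ c.line ⊓ d.line := le_inf hXc h
            rw [hopp.2.2, le_bot_iff] at hXb
            exact hXne hXb
      refine Or.inl ⟨?_, X, π, hX1, hπ3, ?_⟩
      · rw [hWeq]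
        exact ncard_pencil hX1 hπ3 hXπ
      · intro l hl
        rw [hWeq] at hl
        exact ⟨hl.2.1, hl.2.2⟩
    · -- plane case
      push_neg at hallX
      obtain ⟨l3, hl3W, hXl3⟩ := hallX
      obtain ⟨hl3r, hl3f⟩ := (hWfull l3).mp hl3W
      have hl3π : l3 ≤ π := hall l3 hl3W
      have hclaim : ∀ d ∈ M, d.line ≤ π := by
        intro d hd
        by_cases hdπ : d.line ≤ π
        · exact hdπ
        exfalso
        have hX' : X ≤ d.line := (hB d hd).resolve_left hdπ
        have hdl : finrank F (d.line ⊓ π : Submodule F (Fin 4 → F)) = 1 :=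
          line_inf_plane d.line_rank hπ3 hdπ
        have hXeq : X = d.line ⊓ π := eq_of_le_rank1 hdl (le_inf hX' hXπ) hXne
        have hs : l3 ⊓ d.line ≠ ⊥ := full_meets hM.1 hl3r hl3f hd
        have hsle : l3 ⊓ d.line ≤ X := by
          rw [hXeq]
          exact le_inf inf_le_right (le_trans inf_le_left hl3π)
        have heq : l3 ⊓ d.line = X := eq_of_le_rank1 hX1 hsle hs
        exact hXl3 (le_trans (le_of_eq heq.symm) inf_le_left)
      have hWeq : W = {m : Submodule F (Fin 4 → F) | finrank F m = 2 ∧ m ≤ π} := by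
        ext m
        constructor
        · intro hmW
          obtain ⟨hmr, hmf⟩ := (hWfull m).mp hmW
          obtain ⟨dm, hdml⟩ := exists_chamber_on hmr
          have h := hclaim dm (hmf dm hdml)
          rw [hdml] at h
          exact ⟨hmr, h⟩
        · rintro ⟨hmr, hmπ⟩
          refine (hWfull m).mpr ⟨hmr, fun c hc => hM.2 c fun d hd hopp => ?_⟩
          have hcπ : c.line ≤ π := by rw [hc]; exact hmπ
          exact lines_meet c.line_rank d.line_rank hπ3 hcπ (hclaim d hd) hopp.2.2
      refine Or.inr ⟨?_, π, Or.inr hπ3, ?_⟩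
      · rw [hWeq]
        exact ncard_rank2_le π hπ3
      · intro l hl
        rw [hWeq] at hl
        exact Or.inr hl.2
  · -- point case
    push_neg at hall
    obtain ⟨l3, hl3W, hl3π⟩ := hall
    obtain ⟨hl3r, hl3f⟩ := (hWfull l3).mp hl3W
    obtain ⟨d3, hd3l⟩ := exists_chamber_on hl3r
    have hd3M : d3 ∈ M := hl3f d3 hd3l
    have hXl3 : X ≤ l3 := by
      rcases hB d3 hd3M with h | h
      · rw [hd3l] at h
        exact absurd h hl3π
      · rwa [hd3l] at h
    have hl3infπ : finrank F (l3 ⊓ π : Submodule F (Fin 4 → F)) = 1 :=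
      line_inf_plane hl3r hπ3 hl3π
    have hXeq : X = l3 ⊓ π := eq_of_le_rank1 hl3infπ (le_inf hXl3 hXπ) hXne
    have hclaim : ∀ d ∈ M, X ≤ d.line := by
      intro d hd
      rcases hB d hd with h | h
      · have hs : l3 ⊓ d.line ≠ ⊥ := full_meets hM.1 hl3r hl3f hd
        have hsle : l3 ⊓ d.line ≤ X := by
          rw [hXeq]
          exact le_inf inf_le_left (le_trans inf_le_right h)
        have heq : l3 ⊓ d.line = X := eq_of_le_rank1 hX1 hsle hs
        exact le_trans (le_of_eq heq.symm) inf_le_right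
      · exact h
    have hWeq : W = {m : Submodule F (Fin 4 → F) | finrank F m = 2 ∧ X ≤ m} := by
      ext m
      constructor
      · intro hmW
        obtain ⟨hmr, hmf⟩ := (hWfull m).mp hmW
        obtain ⟨dm, hdml⟩ := exists_chamber_on hmr
        have h := hclaim dm (hmf dm hdml)
        rw [hdml] at h
        exact ⟨hmr, h⟩
      · rintro ⟨hmr, hXm⟩
        refine (hWfull m).mpr ⟨hmr, fun c hc => hM.2 c fun d hd hopp => ?_⟩
        have hXc : X ≤ c.line := by rw [hc]; exact hXm
        have hXb : X ≤ c.line ⊓ d.line := le_inf hXc (hclaim d hd)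
        rw [hopp.2.2, le_bot_iff] at hXb
        exact hXne hXb
    refine Or.inr ⟨?_, X, Or.inl hX1, ?_⟩
    · rw [hWeq]
      exact ncard_lines_through hX1
    · intro l hl
      rw [hWeq] at hl
      exact Or.inl hl.2
end
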